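/- arXiv:1803.03311 — 4 statements merged into one kernel-verified Lean document; each statement's English description precedes it below -/
import Mathlib

section
/- Let A be an abelian category and ω a class of objects of A that is self-orthogonal, i.e., Ext^1_A(W, W') = 0 for all W, W' in ω. Then the class of contractible complexes with entries in ω is self-orthogonal in the category of chain complexes: Ext^1_{Ch(A)}(X, Y) = 0 whenever X and Y are contractible complexes with entries in ω. -/
open CategoryTheory Category Limits

/-- `Ext1Zero Z X` expresses the vanishing of `Ext¹(Z, X)` in an abelian category:
every short exact sequence `0 → X → E → Z → 0` splits. -/
def Ext1Zero {C : Type*} [Category C] [Abelian C] (Z X : C) : Prop :=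
  ∀ ⦃E : C⦄ (i : X ⟶ E) (p : E ⟶ Z) (w : i ≫ p = 0),
    (ShortComplex.mk i p w).ShortExact → ∃ r : E ⟶ X, i ≫ r = 𝟙 X

/-- Let `A` be an abelian category and `ω` a self-orthogonal class of objects
(`Ext¹(W, W') = 0` for all `W, W' ∈ ω`). Then the class of contractible complexes with entries
in `ω` is self-orthogonal in the category of chain complexes: `Ext¹_{Ch(A)}(X, Y) = 0` for any
two contractible complexes `X`, `Y` with entries in `ω`. -/
theorem contractible_selfOrthogonal
    {A : Type*} [Category A] [Abelian A] (ω : Set A)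
    (hω : ∀ W ∈ ω, ∀ W' ∈ ω, Ext1Zero W W')
    (X Y : ChainComplex A ℤ)
    (hXω : ∀ n, X.X n ∈ ω) (hYω : ∀ n, Y.X n ∈ ω)
    (hXc : Nonempty (Homotopy (𝟙 X) 0)) (hYc : Nonempty (Homotopy (𝟙 Y) 0)) :
    Ext1Zero X Y := by
  obtain ⟨h⟩ := hXc
  intro E i p w hse
  -- degreewise short exactness
  have hsen : ∀ n : ℤ, (ShortComplex.mk (i.f n) (p.f n)
      (by rw [← HomologicalComplex.comp_f, w]; rfl)).ShortExact := fun n =>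
    hse.map_of_exact (HomologicalComplex.eval A (ComplexShape.down ℤ) n)
  -- degreewise sections
  have hsec : ∀ n : ℤ, ∃ s : X.X n ⟶ E.X n, s ≫ p.f n = 𝟙 (X.X n) := by
    intro n
    obtain ⟨r, hr⟩ := hω _ (hXω n) _ (hYω n) (i.f n) (p.f n) _ (hsen n)
    exact ⟨(ShortComplex.Splitting.ofExactOfRetraction _ (hsen n).exact r hr
      (hsen n).epi_g).s, (ShortComplex.Splitting.ofExactOfRetraction _ (hsen n).exact r hr
      (hsen n).epi_g).s_g⟩
  choose s hs using hsec
  -- the chain-map section of p built from the contraction of X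
  let S : X ⟶ E :=
    { f := fun n => h.hom n (n + 1) ≫ s (n + 1) ≫ E.d (n + 1) n +
        X.d n (n - 1) ≫ h.hom (n - 1) n ≫ s n
      comm' := by
        rintro n j hj
        have hj' : j + 1 = n := hj
        obtain rfl : j = n - 1 := by omega
        simp only [Preadditive.add_comp, Preadditive.comp_add, Category.assoc,
          HomologicalComplex.d_comp_d, HomologicalComplex.d_comp_d_assoc,
          comp_zero, zero_comp, add_zero, zero_add]
        rw [hj'] }
  have hSp : S ≫ p = 𝟙 X := by
    ext n
    have hc := h.comm n
    rw [dNext_eq h.hom (show (ComplexShape.down ℤ).Rel n (n - 1) by simp),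
      prevD_eq h.hom (show (ComplexShape.down ℤ).Rel (n + 1) n by simp)] at hc
    simp only [HomologicalComplex.comp_f, HomologicalComplex.id_f,
      HomologicalComplex.zero_f_apply, add_zero] at hc ⊢
    show (h.hom n (n + 1) ≫ s (n + 1) ≫ E.d (n + 1) n +
        X.d n (n - 1) ≫ h.hom (n - 1) n ≫ s n) ≫ p.f n = 𝟙 (X.X n)
    rw [Preadditive.add_comp, Category.assoc, Category.assoc, Category.assoc,
      ← p.comm (n + 1) n, ← Category.assoc (s (n + 1)), hs (n + 1), Category.id_comp,
      Category.assoc, hs n, Category.comp_id]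
    exact (add_comm _ _).trans hc.symm
  -- get the retraction from the section
  have := hse.mono_f
  exact ⟨(ShortComplex.Splitting.ofExactOfSection _ hse.exact S hSp hse.mono_f).r,
    (ShortComplex.Splitting.ofExactOfSection _ hse.exact S hSp hse.mono_f).f_r⟩
end

section
/- Let A be an abelian category and (C, D) a cotorsion pair in A. If X is an acyclic chain complex all of whose cycle objects Z_n(X) lie in C, and Y is a bounded below complex all of whose components lie in D, then Ext^1_{Ch(A)}(X, Y) = 0. -/
open CategoryTheory Category Limits

/-- `(𝒞, 𝒟)` is a cotorsion pair: each class is the `Ext¹`-orthogonal of the other. -/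
def IsCotorsionPair {C : Type*} [Category C] [Abelian C] (𝒞 𝒟 : Set C) : Prop :=
  (∀ X, X ∈ 𝒞 ↔ ∀ Y ∈ 𝒟, Ext1Zero X Y) ∧ (∀ Y, Y ∈ 𝒟 ↔ ∀ X ∈ 𝒞, Ext1Zero X Y)

section AuxLemmas

open CategoryTheory.Abelian.Pseudoelement
open scoped Pseudoelement

variable {A : Type*} [Category A] [Abelian A]

/-- `Ext1Zero` is invariant under isomorphism in the first argument. -/
lemma ext1Zero_of_iso {Z Z' V : A} (e : Z' ≅ Z) (h : Ext1Zero Z V) : Ext1Zero Z' V := by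
  intro E i p w hse
  have w' : i ≫ (p ≫ e.hom) = 0 := by rw [← assoc, w, zero_comp]
  haveI := hse.mono_f
  haveI := hse.epi_g
  have hse' : (ShortComplex.mk i (p ≫ e.hom) w').ShortExact := by
    have e2 : ShortComplex.mk i p w ≅ ShortComplex.mk i (p ≫ e.hom) w' :=
      ShortComplex.isoMk (Iso.refl _) (Iso.refl _) e (by simp) (by simp)
    exact ShortComplex.ShortExact.mk' (ShortComplex.exact_of_iso e2 hse.exact)
      hse.mono_f (epi_comp _ _)
  exact h i (p ≫ e.hom) w' hse'

/-- Extension of morphisms along a monomorphism whose cokernel `Q` satisfies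
`Ext¹(Q, V) = 0`. -/
lemma ext_lift {K W Q V : A} (m : K ⟶ W) (q : W ⟶ Q) (w : m ≫ q = 0)
    (hS : (ShortComplex.mk m q w).ShortExact) (hQ : Ext1Zero Q V) (ψ : K ⟶ V) :
    ∃ Ψ : W ⟶ V, m ≫ Ψ = ψ := by
  haveI : Mono m := hS.mono_f
  haveI : Epi q := hS.epi_g
  let iV : V ⟶ pushout ψ m := pushout.inl ψ m
  let iW : W ⟶ pushout ψ m := pushout.inr ψ m
  haveI : Mono iV := CategoryTheory.Abelian.mono_pushout_of_mono_g ψ m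
  let pQ : pushout ψ m ⟶ Q := pushout.desc 0 q (by rw [comp_zero, w])
  have hiVpQ : iV ≫ pQ = 0 := pushout.inl_desc _ _ _
  have hiWpQ : iW ≫ pQ = q := pushout.inr_desc _ _ _
  haveI : Epi pQ := epi_of_epi_fac hiWpQ
  have hexact : (ShortComplex.mk iV pQ hiVpQ).Exact := by
    apply ShortComplex.exact_of_g_is_cokernel
    have hd : ∀ {T : A} (u : pushout ψ m ⟶ T), iV ≫ u = 0 → m ≫ (iW ≫ u) = 0 := by
      intro T u hu
      rw [← assoc, ← pushout.condition, assoc, hu, comp_zero]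
    have hfac : ∀ {T : A} (u : pushout ψ m ⟶ T) (hu : iV ≫ u = 0),
        pQ ≫ hS.exact.desc (iW ≫ u) (hd u hu) = u := by
      intro T u hu
      apply pushout.hom_ext
      · show iV ≫ pQ ≫ _ = iV ≫ u
        rw [← assoc, hiVpQ, zero_comp, hu]
      · show iW ≫ pQ ≫ _ = iW ≫ u
        rw [← assoc, hiWpQ, hS.exact.g_desc]
    exact CokernelCofork.IsColimit.ofπ _ _
      (fun {T} u hu => hS.exact.desc (iW ≫ u) (hd u hu))
      (fun {T} u hu => hfac u hu)
      (fun {T} u hu m' hm' => by rw [← cancel_epi pQ, hm', hfac u hu])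
  have hse : (ShortComplex.mk iV pQ hiVpQ).ShortExact :=
    ShortComplex.ShortExact.mk' hexact ‹Mono iV› ‹Epi pQ›
  obtain ⟨r, hr⟩ := hQ iV pQ hiVpQ hse
  refine ⟨iW ≫ r, ?_⟩
  rw [← assoc, ← pushout.condition, assoc, hr, comp_id]

/-- The class of objects `B` with `Ext¹(B, V) = 0` is closed under extensions. -/
lemma ext_closed {Ao B Cc V : A} (a : Ao ⟶ B) (c : B ⟶ Cc) (w : a ≫ c = 0)
    (hS : (ShortComplex.mk a c w).ShortExact) (hA : Ext1Zero Ao V) (hC : Ext1Zero Cc V) :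
    Ext1Zero B V := by
  intro E i p wip hip
  haveI : Mono i := hip.mono_f
  haveI : Epi p := hip.epi_g
  haveI : Mono a := hS.mono_f
  haveI : Epi c := hS.epi_g
  -- Step 1: pull back along `a` to get a short exact sequence `V → E' → Ao` and split it.
  let f1 : pullback p a ⟶ E := pullback.fst p a
  let s2 : pullback p a ⟶ Ao := pullback.snd p a
  let i' : V ⟶ pullback p a := pullback.lift i 0 (by rw [wip, zero_comp])
  have hi'f : i' ≫ f1 = i := pullback.lift_fst _ _ _
  have hi's : i' ≫ s2 = 0 := pullback.lift_snd _ _ _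
  haveI : Mono i' := mono_of_mono_fac hi'f
  haveI : Epi s2 := inferInstance
  have hex1 : (ShortComplex.mk i' s2 hi's).Exact := by
    apply ShortComplex.exact_of_f_is_kernel
    have hlift : ∀ {T : A} (u : T ⟶ pullback p a), u ≫ s2 = 0 → (u ≫ f1) ≫ p = 0 := by
      intro T u hu
      rw [assoc, pullback.condition, ← assoc, hu, zero_comp]
    refine KernelFork.IsLimit.ofι _ _
      (fun {T} u hu => hip.exact.lift (u ≫ f1) (hlift u hu)) ?_ ?_
    · intro T u hu
      apply pullback.hom_ext
      · show (_ ≫ i') ≫ f1 = u ≫ f1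
        rw [assoc, hi'f, hip.exact.lift_f]
      · show (_ ≫ i') ≫ s2 = u ≫ s2
        rw [assoc, hi's, comp_zero, hu]
    · intro T u hu m' hm'
      rw [← cancel_mono i', hm', ← cancel_mono f1, assoc, hi'f, hip.exact.lift_f]
  have hse1 : (ShortComplex.mk i' s2 hi's).ShortExact :=
    ShortComplex.ShortExact.mk' hex1 ‹Mono i'› ‹Epi s2›
  obtain ⟨r', hr'⟩ := hA i' s2 hi's hse1
  let spl := ShortComplex.Splitting.ofExactOfRetraction _ hex1 r' hr' ‹Epi s2›
  -- the induced section `Ao ⟶ E` of `p` over `a`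
  let sA : Ao ⟶ E := spl.s ≫ f1
  have hsAp : sA ≫ p = a := by
    show (spl.s ≫ f1) ≫ p = a
    rw [assoc, pullback.condition, ← assoc]
    have : spl.s ≫ s2 = 𝟙 Ao := spl.s_g
    rw [this, id_comp]
  haveI : Mono sA := mono_of_mono_fac hsAp
  -- Step 2: quotient by `sA` and split the induced sequence `V → E₂ → Cc`.
  let π : E ⟶ cokernel sA := cokernel.π sA
  let i2 : V ⟶ cokernel sA := i ≫ π
  have hsc : sA ≫ p ≫ c = 0 := by rw [← assoc, hsAp, w]
  let p2 : cokernel sA ⟶ Cc := cokernel.desc sA (p ≫ c) hsc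
  have hπp2 : π ≫ p2 = p ≫ c := cokernel.π_desc _ _ _
  have hi2p2 : i2 ≫ p2 = 0 := by
    show (i ≫ π) ≫ p2 = 0
    rw [assoc, hπp2, ← assoc, wip, zero_comp]
  haveI : Epi p2 := by
    haveI : Epi (p ≫ c) := epi_comp _ _
    exact epi_of_epi_fac hπp2
  have hexπ : (ShortComplex.mk sA π (cokernel.condition sA)).Exact :=
    ShortComplex.exact_of_g_is_cokernel _ (cokernelIsCokernel sA)
  haveI : Mono i2 := by
    apply mono_of_zero_of_map_zero
    intro v hv
    obtain ⟨x, hx⟩ := pseudo_exact_of_exact hexπ (pseudoApply i v)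
      (by rw [← Abelian.Pseudoelement.comp_apply]; exact hv)
    have hax : pseudoApply a x = 0 := by
      rw [← hsAp, Abelian.Pseudoelement.comp_apply, hx,
        ← Abelian.Pseudoelement.comp_apply, wip]
      exact zero_apply _ _
    have hx0 : x = 0 := zero_of_map_zero a (pseudo_injective_of_mono a) x hax
    have hiv : pseudoApply i v = 0 := by rw [← hx, hx0, apply_zero]
    exact zero_of_map_zero i (pseudo_injective_of_mono i) v hiv
  have hex2 : (ShortComplex.mk i2 p2 hi2p2).Exact := by
    apply exact_of_pseudo_exact
    intro b hb
    obtain ⟨e, he⟩ := pseudo_surjective_of_epi π b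
    have hcpe : pseudoApply c (pseudoApply p e) = 0 := by
      rw [← Abelian.Pseudoelement.comp_apply, ← hπp2,
        Abelian.Pseudoelement.comp_apply, he]
      exact hb
    obtain ⟨x, hx⟩ := pseudo_exact_of_exact hS.exact (pseudoApply p e) hcpe
    have hpe : pseudoApply p e = pseudoApply p (pseudoApply sA x) := by
      rw [← Abelian.Pseudoelement.comp_apply, hsAp, hx]
    obtain ⟨z, hz1, hz2⟩ := sub_of_eq_image p e (pseudoApply sA x) hpe
    obtain ⟨v, hv⟩ := pseudo_exact_of_exact hip.exact z hz1
    refine ⟨v, ?_⟩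
    have hπsA : pseudoApply π (pseudoApply sA x) = 0 := by
      rw [← Abelian.Pseudoelement.comp_apply, cokernel.condition]
      exact zero_apply _ _
    calc pseudoApply i2 v = pseudoApply π (pseudoApply i v) :=
          Abelian.Pseudoelement.comp_apply _ _ _
      _ = pseudoApply π z := by rw [hv]
      _ = pseudoApply π e := hz2 _ π hπsA
      _ = b := he
  have hse2 : (ShortComplex.mk i2 p2 hi2p2).ShortExact :=
    ShortComplex.ShortExact.mk' hex2 ‹Mono i2› ‹Epi p2›
  obtain ⟨r2, hr2⟩ := hC i2 p2 hi2p2 hse2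
  refine ⟨π ≫ r2, ?_⟩
  rw [← assoc]
  exact hr2

end AuxLemmas

section Contraction

variable {A : Type*} [Category A] [Abelian A]

/-- Transport of a morphism along an equality of integer indices. -/
private def castHom {F G : ℤ → A} {a b : ℤ} (e : a = b) (f : F a ⟶ G a) : F b ⟶ G b :=
  eqToHom (congrArg F e.symm) ≫ f ≫ eqToHom (congrArg G e)

private lemma castHom_rfl {F G : ℤ → A} {a : ℤ} (f : F a ⟶ G a) :
    castHom rfl f = f := by simp [castHom]

private lemma castHom_trans {F G : ℤ → A} {a b c : ℤ} (e : a = b) (e' : b = c)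
    (f : F a ⟶ G a) : castHom e' (castHom e f) = castHom (e.trans e') f := by
  subst e; subst e'; simp [castHom]

/-- Transport of a morphism with a property along an equality of integer indices. -/
private def castSub (X Y : CochainComplex A ℤ) (Q : ∀ n : ℤ, (X.X n ⟶ Y.X n) → Prop)
    {a b : ℤ} (e : a = b) (fq : {f : X.X a ⟶ Y.X a // Q a f}) :
    {f : X.X b ⟶ Y.X b // Q b f} :=
  ⟨castHom (F := X.X) (G := Y.X) e fq.1, by subst e; simpa [castHom] using fq.2⟩

private lemma castSub_val (X Y : CochainComplex A ℤ) (Q : ∀ n : ℤ, (X.X n ⟶ Y.X n) → Prop)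
    {a b : ℤ} (e : a = b) (fq : {f : X.X a ⟶ Y.X a // Q a f}) :
    (castSub X Y Q e fq).1 = castHom e fq.1 := rfl

/-- Iterating a step construction, starting at degree `N`. -/
private noncomputable def mkSeq (X Y : CochainComplex A ℤ)
    (Q : ∀ n : ℤ, (X.X n ⟶ Y.X n) → Prop) (N : ℤ)
    (base : {f : X.X N ⟶ Y.X N // Q N f})
    (step : ∀ n, {f : X.X n ⟶ Y.X n // Q n f} → {f : X.X (n+1) ⟶ Y.X (n+1) // Q (n+1) f}) :
    ∀ k : ℕ, {f : X.X (N + (k:ℤ)) ⟶ Y.X (N + (k:ℤ)) // Q (N + (k:ℤ)) f} := fun k =>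
  Nat.rec (castSub X Y Q (by simp) base)
    (fun k ih => castSub X Y Q (by push_cast; ring) (step _ ih)) k

private lemma exists_contraction (X Y : CochainComplex A ℤ)
    (h : ∀ n : ℤ, X.X n ⟶ Y.X (n+1)) (N : ℤ)
    (hzero : ∀ n : ℤ, n ≤ N → IsZero (Y.X n))
    (hd : ∀ l m : ℤ, l + 1 = m → h l ≫ Y.d (l+1) (m+1) + X.d l m ≫ h m = 0)
    (hstep : ∀ (n : ℤ) (f : X.X n ⟶ Y.X n), X.d (n-1) n ≫ (f ≫ Y.d n (n+1) - h n) = 0 →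
      ∃ g : X.X (n+1) ⟶ Y.X (n+1), X.d n (n+1) ≫ g = f ≫ Y.d n (n+1) - h n) :
    ∃ t : ∀ n : ℤ, X.X n ⟶ Y.X n,
      ∀ n : ℤ, X.d n (n+1) ≫ t (n+1) = t n ≫ Y.d n (n+1) - h n := by
  classical
  have hstep' : ∀ (n : ℤ) (f : X.X n ⟶ Y.X n),
      (X.d (n-1) n ≫ (f ≫ Y.d n (n+1) - h n) = 0) →
      ∃ g, (X.d n (n+1) ≫ g = f ≫ Y.d n (n+1) - h n) ∧
        (X.d ((n+1)-1) (n+1) ≫ (g ≫ Y.d (n+1) ((n+1)+1) - h (n+1)) = 0) := by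
    intro n f hf
    obtain ⟨g, hg⟩ := hstep n f hf
    refine ⟨g, hg, ?_⟩
    rw [show (n+1)-1 = n by ring]
    have hdd := hd n (n+1) rfl
    rw [Preadditive.comp_sub, ← assoc, hg, Preadditive.sub_comp, assoc, Y.d_comp_d, comp_zero, zero_sub,
      sub_eq_add_neg, ← neg_add, neg_eq_zero]
    exact hdd
  choose gf hg1 hg2 using hstep'
  have hQ0 : X.d (N-1) N ≫ ((0 : X.X N ⟶ Y.X N) ≫ Y.d N (N+1) - h N) = 0 := by
    have h0 : h (N-1) = 0 := (hzero ((N-1)+1) (by omega)).eq_of_tgt _ _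
    have hdd := hd (N-1) N (by ring)
    rw [h0, zero_comp, zero_add] at hdd
    rw [zero_comp, zero_sub, Preadditive.comp_neg, hdd, neg_zero]
  let Q : ∀ n : ℤ, (X.X n ⟶ Y.X n) → Prop :=
    fun n f => X.d (n-1) n ≫ (f ≫ Y.d n (n+1) - h n) = 0
  let step : ∀ n, {f : X.X n ⟶ Y.X n // Q n f} → {f : X.X (n+1) ⟶ Y.X (n+1) // Q (n+1) f} :=
    fun n fq => ⟨gf n fq.1 fq.2, hg2 n fq.1 fq.2⟩
  let seq := mkSeq X Y Q N ⟨0, hQ0⟩ step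
  refine ⟨fun n => if hn : N ≤ n then
    castHom (show N + ((n - N).toNat : ℤ) = n by omega) (seq (n - N).toNat).1 else 0, ?_⟩
  intro n
  have hcongr : ∀ {j j' : ℕ} (e : j = j') {b : ℤ} (pf : N + (j:ℤ) = b) (pf' : N + (j':ℤ) = b),
      castHom (F := X.X) (G := Y.X) pf (seq j).1 = castHom pf' (seq j').1 := by
    rintro j j' rfl b pf pf'; rfl
  have hstar : ∀ {a b : ℤ} (e : a = b) (e' : a + 1 = b + 1)
      (f : X.X a ⟶ Y.X a) (g : X.X (a+1) ⟶ Y.X (a+1)),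
      X.d a (a+1) ≫ g = f ≫ Y.d a (a+1) - h a →
      X.d b (b+1) ≫ castHom e' g = castHom e f ≫ Y.d b (b+1) - h b := by
    rintro a b rfl e' f g hs
    simpa [castHom] using hs
  beta_reduce
  by_cases hn : N ≤ n
  · have hn1 : N ≤ n + 1 := by omega
    rw [dif_pos hn, dif_pos hn1]
    have hj : (n + 1 - N).toNat = (n - N).toNat + 1 := by omega
    rw [hcongr hj _ (by omega)]
    have hseq : seq ((n - N).toNat + 1) =
        castSub X Y Q (by push_cast; ring) (step _ (seq (n - N).toNat)) := rfl
    rw [hseq, castSub_val, castHom_trans]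
    exact hstar (by omega) _ (seq (n - N).toNat).1 (step _ (seq (n - N).toNat)).1
      (hg1 _ (seq (n - N).toNat).1 (seq (n - N).toNat).2)
  · rw [dif_neg hn]
    have hz1 : IsZero (Y.X (n+1)) := hzero (n+1) (by omega)
    have h1 : h n = 0 := hz1.eq_of_tgt _ _
    have h2 : ∀ u : X.X (n+1) ⟶ Y.X (n+1), X.d n (n+1) ≫ u = 0 := fun u => by
      rw [hz1.eq_of_tgt u 0, comp_zero]
    rw [h2]
    rw [h1, zero_comp, zero_sub, neg_zero]

end Contraction

section MainProof

variable {A : Type*} [Category A] [Abelian A]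

private lemma splitting_identities {Y E X : CochainComplex A ℤ} (i : Y ⟶ E) (p : E ⟶ X)
    (r : ∀ n : ℤ, E.X n ⟶ Y.X n) (s : ∀ n : ℤ, X.X n ⟶ E.X n)
    (hir : ∀ n, i.f n ≫ r n = 𝟙 _) (hsp : ∀ n, s n ≫ p.f n = 𝟙 _)
    (hid : ∀ n, r n ≫ i.f n + p.f n ≫ s n = 𝟙 _) :
    (∀ n : ℤ, E.d n (n+1) ≫ r (n+1)
        = r n ≫ Y.d n (n+1) + p.f n ≫ (s n ≫ E.d n (n+1) ≫ r (n+1))) ∧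
    (∀ l m : ℤ, l + 1 = m →
      (s l ≫ E.d l (l+1) ≫ r (l+1)) ≫ Y.d (l+1) (m+1)
        + X.d l m ≫ (s m ≫ E.d m (m+1) ≫ r (m+1)) = 0) := by
  constructor
  · intro n
    calc E.d n (n+1) ≫ r (n+1)
        = (r n ≫ i.f n + p.f n ≫ s n) ≫ E.d n (n+1) ≫ r (n+1) := by
          rw [hid n, id_comp]
      _ = r n ≫ i.f n ≫ E.d n (n+1) ≫ r (n+1)
            + p.f n ≫ (s n ≫ E.d n (n+1) ≫ r (n+1)) := by
          simp [Preadditive.add_comp, assoc]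
      _ = r n ≫ Y.d n (n+1) + p.f n ≫ (s n ≫ E.d n (n+1) ≫ r (n+1)) := by
          rw [← assoc (i.f n), i.comm n (n+1), assoc, hir (n+1), comp_id]
  · intro l m e
    subst e
    have t1 : (s l ≫ E.d l (l+1) ≫ r (l+1)) ≫ Y.d (l+1) (l+1+1)
        = s l ≫ E.d l (l+1) ≫ (r (l+1) ≫ i.f (l+1)) ≫ E.d (l+1) (l+1+1) ≫ r (l+1+1) := by
      simp only [assoc]
      rw [i.comm_assoc (l+1) (l+1+1), hir (l+1+1), comp_id]
    have t2 : X.d l (l+1) ≫ (s (l+1) ≫ E.d (l+1) (l+1+1) ≫ r (l+1+1))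
        = s l ≫ E.d l (l+1) ≫ (p.f (l+1) ≫ s (l+1)) ≫ E.d (l+1) (l+1+1) ≫ r (l+1+1) := by
      simp only [assoc]
      rw [← p.comm_assoc l (l+1), reassoc_of% (hsp l)]
    rw [t1, t2]
    calc s l ≫ E.d l (l+1) ≫ (r (l+1) ≫ i.f (l+1)) ≫ E.d (l+1) (l+1+1) ≫ r (l+1+1)
          + s l ≫ E.d l (l+1) ≫ (p.f (l+1) ≫ s (l+1)) ≫ E.d (l+1) (l+1+1) ≫ r (l+1+1)
        = s l ≫ E.d l (l+1) ≫ ((r (l+1) ≫ i.f (l+1)) + (p.f (l+1) ≫ s (l+1)))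
            ≫ E.d (l+1) (l+1+1) ≫ r (l+1+1) := by
          simp [Preadditive.add_comp, Preadditive.comp_add]
      _ = s l ≫ E.d l (l+1) ≫ E.d (l+1) (l+1+1) ≫ r (l+1+1) := by
          rw [hid (l+1), id_comp]
      _ = 0 := by
          rw [E.d_comp_d_assoc, zero_comp, comp_zero]

private lemma sesZ_w (X : CochainComplex A ℤ) (n : ℤ) :
    kernel.ι (X.d n (n+1)) ≫
      kernel.lift (X.d (n+1) (n+1+1)) (X.d n (n+1)) (X.d_comp_d n (n+1) (n+1+1)) = 0 := by
  rw [← cancel_mono (kernel.ι (X.d (n+1) (n+1+1))), assoc, kernel.lift_ι,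
    kernel.condition, zero_comp]

private lemma epi_tau (X : CochainComplex A ℤ) (hXac : ∀ n, X.ExactAt n) (n : ℤ) :
    Epi (kernel.lift (X.d (n+1) (n+1+1)) (X.d n (n+1)) (X.d_comp_d n (n+1) (n+1+1))) := by
  have hex := (X.exactAt_iff' n (n+1) (n+1+1)
    (by rw [CochainComplex.prev]; ring) (by rw [CochainComplex.next])).1 (hXac (n+1))
  exact (ShortComplex.exact_iff_epi_kernel_lift _).1 hex

private lemma sesZ_shortExact (X : CochainComplex A ℤ) (hXac : ∀ n, X.ExactAt n) (n : ℤ) :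
    (ShortComplex.mk _ _ (sesZ_w X n)).ShortExact := by
  haveI := epi_tau X hXac n
  refine ShortComplex.ShortExact.mk' ?_ inferInstance (epi_tau X hXac n)
  apply ShortComplex.exact_of_f_is_kernel
  have hd : X.d n (n+1) = kernel.lift (X.d (n+1) (n+1+1)) (X.d n (n+1))
      (X.d_comp_d n (n+1) (n+1+1)) ≫ kernel.ι (X.d (n+1) (n+1+1)) :=
    (kernel.lift_ι _ _ _).symm
  refine KernelFork.IsLimit.ofι _ _
    (fun {T} u hu => kernel.lift (X.d n (n+1)) u (by rw [hd, ← assoc, hu, zero_comp])) ?_ ?_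
  · intro T u hu
    exact kernel.lift_ι _ _ _
  · intro T u hu m' hm'
    rw [← cancel_mono (kernel.ι (X.d n (n+1))), hm', kernel.lift_ι]

private lemma step_extension (X Y : CochainComplex A ℤ) (hXac : ∀ n, X.ExactAt n)
    (hZ : ∀ n m : ℤ, Ext1Zero (kernel (X.d n (n+1))) (Y.X m))
    (n : ℤ) (φ : X.X n ⟶ Y.X (n+1)) (hφ : X.d (n-1) n ≫ φ = 0) :
    ∃ g : X.X (n+1) ⟶ Y.X (n+1), X.d n (n+1) ≫ g = φ := by
  have hd : X.d n (n+1) = kernel.lift (X.d (n+1) (n+1+1)) (X.d n (n+1))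
      (X.d_comp_d n (n+1) (n+1+1)) ≫ kernel.ι (X.d (n+1) (n+1+1)) :=
    (kernel.lift_ι _ _ _).symm
  haveI hτ : Epi (kernel.lift (X.d (n+1) (n+1+1)) (X.d n (n+1))
      (X.d_comp_d n (n+1) (n+1+1))) := epi_tau X hXac n
  -- The epimorphism `X.X (n-1) ⟶ kernel (X.d n (n+1))` coming from exactness at `n`
  haveI hτp : Epi (kernel.lift (X.d n (n+1)) (X.d (n-1) n) (X.d_comp_d (n-1) n (n+1))) := by
    have hex := (X.exactAt_iff' (n-1) n (n+1)
      (by rw [CochainComplex.prev]) (by rw [CochainComplex.next])).1 (hXac n)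
    exact (ShortComplex.exact_iff_epi_kernel_lift _).1 hex
  have hιφ : kernel.ι (X.d n (n+1)) ≫ φ = 0 := by
    rw [← cancel_epi (kernel.lift (X.d n (n+1)) (X.d (n-1) n) (X.d_comp_d (n-1) n (n+1))),
      comp_zero, ← assoc, kernel.lift_ι, hφ]
  have hkτ : kernel.ι (kernel.lift (X.d (n+1) (n+1+1)) (X.d n (n+1))
      (X.d_comp_d n (n+1) (n+1+1))) ≫ φ = 0 := by
    have h1 : kernel.ι (kernel.lift (X.d (n+1) (n+1+1)) (X.d n (n+1))
        (X.d_comp_d n (n+1) (n+1+1))) ≫ X.d n (n+1) = 0 := by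
      calc kernel.ι (kernel.lift (X.d (n+1) (n+1+1)) (X.d n (n+1))
            (X.d_comp_d n (n+1) (n+1+1))) ≫ X.d n (n+1)
          = kernel.ι (kernel.lift (X.d (n+1) (n+1+1)) (X.d n (n+1))
              (X.d_comp_d n (n+1) (n+1+1))) ≫ kernel.lift (X.d (n+1) (n+1+1)) (X.d n (n+1))
              (X.d_comp_d n (n+1) (n+1+1)) ≫ kernel.ι (X.d (n+1) (n+1+1)) := by
            rw [kernel.lift_ι]
        _ = 0 := by rw [← assoc, kernel.condition, zero_comp]
    have h2 : kernel.ι (kernel.lift (X.d (n+1) (n+1+1)) (X.d n (n+1))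
        (X.d_comp_d n (n+1) (n+1+1)))
        = kernel.lift (X.d n (n+1)) _ h1 ≫ kernel.ι (X.d n (n+1)) :=
      (kernel.lift_ι _ _ _).symm
    rw [h2, assoc, hιφ, comp_zero]
  obtain ⟨g, hg⟩ := ext_lift _ _ (sesZ_w X (n+1)) (sesZ_shortExact X hXac (n+1))
    (hZ (n+1+1) (n+1)) (Abelian.epiDesc _ φ hkτ)
  refine ⟨g, ?_⟩
  rw [hd, assoc, hg, Abelian.comp_epiDesc]

end MainProof

/-- Let `(𝒞, 𝒟)` be a cotorsion pair in an abelian category `A`. If `X` is an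
acyclic cochain complex with all cycle objects in `𝒞`, and `Y` is a bounded below complex with
all components in `𝒟`, then `Ext¹_{Ch(A)}(X, Y) = 0`. -/
theorem ext1_vanish_of_acyclic_cycles_left_vs_bounded_below_right
    {A : Type*} [Category A] [Abelian A] (𝒞 𝒟 : Set A)
    (hpair : IsCotorsionPair 𝒞 𝒟)
    (X Y : CochainComplex A ℤ)
    (hXac : ∀ n, X.ExactAt n) (hXcyc : ∀ n, X.cycles n ∈ 𝒞)
    (hYb : ∃ N : ℤ, ∀ n, n ≤ N → Limits.IsZero (Y.X n))
    (hYD : ∀ n, Y.X n ∈ 𝒟) :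
    Ext1Zero X Y := by
  intro E i p w hse
  obtain ⟨N, hN⟩ := hYb
  classical
  have wdeg : ∀ n : ℤ, i.f n ≫ p.f n = 0 := by
    intro n
    rw [← HomologicalComplex.comp_f, w]
    rfl
  have hdeg : ∀ n : ℤ, (ShortComplex.mk (i.f n) (p.f n) (wdeg n)).ShortExact := by
    intro n
    exact hse.map_of_exact (HomologicalComplex.eval A (ComplexShape.up ℤ) n)
  have hZext : ∀ n m : ℤ, Ext1Zero (kernel (X.d n (n+1))) (Y.X m) := by
    intro n m
    have hiso : kernel (X.d n (n+1)) ≅ X.cycles n :=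
      IsLimit.conePointUniqueUpToIso (kernelIsKernel (X.d n (n+1)))
        (X.cyclesIsKernel n (n+1) (by rw [CochainComplex.next]))
    exact ext1Zero_of_iso hiso ((hpair.1 _).1 (hXcyc n) _ (hYD m))
  have hXn : ∀ n : ℤ, Ext1Zero (X.X n) (Y.X n) := fun n =>
    ext_closed _ _ (sesZ_w X n) (sesZ_shortExact X hXac n) (hZext n n) (hZext (n+1) n)
  have hrex : ∀ n : ℤ, ∃ rr : E.X n ⟶ Y.X n, i.f n ≫ rr = 𝟙 _ := fun n =>
    hXn n (i.f n) (p.f n) (wdeg n) (hdeg n)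
  choose rr hrr using hrex
  let spl : ∀ n : ℤ, (ShortComplex.mk (i.f n) (p.f n) (wdeg n)).Splitting := fun n =>
    ShortComplex.Splitting.ofExactOfRetraction _ (hdeg n).exact (rr n) (hrr n) (hdeg n).epi_g
  obtain ⟨I1, I2⟩ := splitting_identities i p (fun n => (spl n).r) (fun n => (spl n).s)
    (fun n => (spl n).f_r) (fun n => (spl n).s_g) (fun n => (spl n).id)
  obtain ⟨t, ht⟩ := exists_contraction X Y
    (fun n => (spl n).s ≫ E.d n (n+1) ≫ (spl (n+1)).r) N hN I2
    (fun n f hf => step_extension X Y hXac hZext n _ hf)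
  refine ⟨{ f := fun n => (spl n).r + p.f n ≫ t n, comm' := ?_ }, ?_⟩
  · intro n m hnm
    have hm : n + 1 = m := hnm
    subst hm
    rw [Preadditive.add_comp, Preadditive.comp_add]
    rw [I1 n]
    rw [← p.comm_assoc n (n+1)]
    rw [ht n]
    simp only [Preadditive.comp_sub, assoc]
    abel
  · apply HomologicalComplex.hom_ext
    intro n
    rw [HomologicalComplex.comp_f, HomologicalComplex.id_f, Preadditive.comp_add,
      (spl n).f_r, ← assoc, wdeg n, zero_comp, add_zero]
end

section
/- Let A be an abelian category and (C, D) a cotorsion pair in A. Define dg-C̃ as the left Ext^1-orthogonal in Ch(A) of D̃, where D̃ is the class of acyclic complexes with all cycle objects in D. If C is generating and D is cogenerating, then every complex X in dg-C̃ has all of its components in C. -/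
open CategoryTheory Category Limits

section Aux

open ZeroObject

variable {A : Type*} [Category A] [Abelian A]

attribute [local simp] pullback.lift_fst pullback.lift_snd pullback.lift_fst_assoc
  pullback.lift_snd_assoc

lemma ext1Zero_of_isZero (Z : A) {W : A} (h : IsZero W) : Ext1Zero Z W := by
  intro E i p w hse
  exact ⟨0, by rw [comp_zero]; exact h.eq_of_src _ _⟩

lemma Ext1Zero.of_iso {Z W W' : A} (e : W ≅ W') (h : Ext1Zero Z W) : Ext1Zero Z W' := by
  intro E i p w hse
  have w' : (e.hom ≫ i) ≫ p = 0 := by rw [assoc, w, comp_zero]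
  have hse' : (ShortComplex.mk (e.hom ≫ i) p w').ShortExact := by
    refine (ShortComplex.shortExact_iff_of_iso
      (ShortComplex.isoMk e.symm (Iso.refl _) (Iso.refl _) (by simp) (by simp) :
        ShortComplex.mk i p w ≅ ShortComplex.mk (e.hom ≫ i) p w')).1 hse
  obtain ⟨r, hr⟩ := h (e.hom ≫ i) p w' hse'
  refine ⟨r ≫ e.hom, ?_⟩
  have : i ≫ r ≫ e.hom = e.inv ≫ ((e.hom ≫ i) ≫ r) ≫ e.hom := by simp
  rw [this, hr]
  simp

lemma mem_D_of_mem_of_iso {𝒞 𝒟 : Set A} (hpair : IsCotorsionPair 𝒞 𝒟)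
    {Y Y' : A} (e : Y ≅ Y') (hY : Y ∈ 𝒟) : Y' ∈ 𝒟 :=
  (hpair.2 Y').2 fun Z hZ => Ext1Zero.of_iso e ((hpair.2 Y).1 hY Z hZ)

lemma mem_D_of_isZero {𝒞 𝒟 : Set A} (hpair : IsCotorsionPair 𝒞 𝒟)
    {Y' : A} (h : IsZero Y') : Y' ∈ 𝒟 :=
  (hpair.2 Y').2 fun Z _ => ext1Zero_of_isZero Z h

/-! ### The disk complex -/

/-- The disk complex `… → 0 → Y → Y → 0 → …` with `Y` in degrees `n-1` and `n`. -/
noncomputable def disk (Y : A) (n : ℤ) : CochainComplex A ℤ where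
  X k := if k = n - 1 ∨ k = n then Y else 0
  d k l := if h : k = n - 1 ∧ l = n then eqToHom (by simp [h.1, h.2]) else 0
  shape k l hkl := by
    rw [dif_neg]
    rintro ⟨h1, h2⟩
    exact hkl (show (ComplexShape.up ℤ).Rel k l by simp only [ComplexShape.up_Rel]; omega)
  d_comp_d' k l m hkl hlm := by
    by_cases h : k = n - 1 ∧ l = n
    · rw [dif_neg (show ¬(l = n - 1 ∧ m = n) by omega), comp_zero]
    · rw [dif_neg h, zero_comp]

variable (Y : A) (n : ℤ)

lemma disk_X_eq {k : ℤ} (h : k = n - 1 ∨ k = n) : (disk Y n).X k = Y := if_pos h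

lemma disk_X_isZero {k : ℤ} (h1 : k ≠ n - 1) (h2 : k ≠ n) : IsZero ((disk Y n).X k) := by
  dsimp [disk]
  rw [if_neg (by tauto)]
  exact isZero_zero A

lemma disk_d_eq {k l : ℤ} (hk : k = n - 1) (hl : l = n) :
    (disk Y n).d k l =
      eqToHom (disk_X_eq Y n (Or.inl hk)) ≫ eqToHom (disk_X_eq Y n (Or.inr hl)).symm := by
  dsimp [disk]
  rw [dif_pos ⟨hk, hl⟩]
  exact (eqToHom_trans _ _).symm

lemma disk_d_eq_zero {k l : ℤ} (h : ¬(k = n - 1 ∧ l = n)) : (disk Y n).d k l = 0 :=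
  dif_neg h

lemma disk_exactAt (k : ℤ) : (disk Y n).ExactAt k := by
  rcases eq_or_ne k (n - 1) with rfl | h1
  · rw [(disk Y n).exactAt_iff' (n - 1 - 1) (n - 1) (n - 1 + 1)
      (CochainComplex.prev ℤ (n - 1)) (CochainComplex.next ℤ (n - 1))]
    refine (ShortComplex.exact_iff_mono _ (disk_d_eq_zero Y n (by omega))).2 ?_
    show Mono ((disk Y n).d (n - 1) (n - 1 + 1))
    rw [disk_d_eq Y n rfl (by omega)]
    infer_instance
  · rcases eq_or_ne k n with rfl | h2
    · rw [(disk Y k).exactAt_iff' (k - 1) k (k + 1)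
        (CochainComplex.prev ℤ k) (CochainComplex.next ℤ k)]
      refine (ShortComplex.exact_iff_epi _ (disk_d_eq_zero Y k (by omega))).2 ?_
      show Epi ((disk Y k).d (k - 1) k)
      rw [disk_d_eq Y k rfl rfl]
      infer_instance
    · rw [HomologicalComplex.exactAt_iff]
      exact ShortComplex.exact_of_isZero_X₂ _ (disk_X_isZero Y n h1 h2)

noncomputable def diskCyclesIso : (disk Y n).cycles n ≅ Y :=
  ((disk Y n).iCyclesIso n (n + 1) (CochainComplex.next ℤ n)
    (disk_d_eq_zero Y n (by omega))) ≪≫ eqToIso (disk_X_eq Y n (Or.inr rfl))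

lemma disk_cycles_isZero {k : ℤ} (h : k ≠ n) : IsZero ((disk Y n).cycles k) := by
  rcases eq_or_ne k (n - 1) with rfl | h1
  · have hm : Mono ((disk Y n).d (n - 1) (n - 1 + 1)) := by
      rw [disk_d_eq Y n rfl (by omega)]
      infer_instance
    have h0 : (disk Y n).iCycles (n - 1) = 0 :=
      zero_of_comp_mono _ ((disk Y n).iCycles_d (n - 1) (n - 1 + 1))
    exact IsZero.of_mono_eq_zero _ h0
  · exact IsZero.of_mono_eq_zero ((disk Y n).iCycles k)
      ((disk_X_isZero Y n h1 h).eq_of_tgt _ _)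

/-! ### A pullback short exact sequence -/

lemma pullback_shortExact {Y₀ E B W : A} (i : Y₀ ⟶ E) (p : E ⟶ B) (w : i ≫ p = 0)
    (hse : (ShortComplex.mk i p w).ShortExact) (g : W ⟶ B) :
    (ShortComplex.mk ((pullback.lift i (0 : Y₀ ⟶ W) (by simp [w]) : Y₀ ⟶ pullback p g))
      (pullback.snd p g) (by simp)).ShortExact := by
  have := hse.mono_f
  have hm : Mono ((pullback.lift i (0 : Y₀ ⟶ W) (by simp [w]) : Y₀ ⟶ pullback p g)) :=
    mono_of_mono_fac (pullback.lift_fst _ _ _)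
  have hexact : (ShortComplex.mk ((pullback.lift i (0 : Y₀ ⟶ W) (by simp [w]) : Y₀ ⟶ pullback p g))
      (pullback.snd p g) (by simp)).Exact := by
    apply ShortComplex.exact_of_f_is_kernel
    apply KernelFork.IsLimit.ofι'
    intro T t ht
    have h1 : (t ≫ pullback.fst p g) ≫ p = 0 := by
      rw [assoc, pullback.condition, ← assoc, ht, zero_comp]
    obtain ⟨l, hl⟩ := KernelFork.IsLimit.lift' hse.fIsKernel (t ≫ pullback.fst p g) h1
    refine ⟨l, pullback.hom_ext ?_ ?_⟩
    · simpa using hl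
    · simpa using ht.symm
  have hp : Epi p := hse.epi_g
  have hepi : Epi (pullback.snd p g) := inferInstance
  exact { exact := hexact, mono_f := hm, epi_g := hepi }

lemma shortExact_of_isZero_of_isIso {Z M M' : A} (hZ : IsZero Z) (f : Z ⟶ M) (g : M ⟶ M')
    [IsIso g] (w : f ≫ g = 0) : (ShortComplex.mk f g w).ShortExact := by
  have hf : f = (0 : Z ⟶ M) := hZ.eq_of_src _ _
  have : Mono f := ⟨fun u v _ => hZ.eq_of_tgt _ _⟩
  exact { exact := (ShortComplex.exact_iff_mono _ hf).2 inferInstance,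
          mono_f := this, epi_g := inferInstance }

/-! ### The extension complex -/

variable (X : CochainComplex A ℤ) {E₀ : A}

/-- The components of the extension complex: pullback in degree `n-1`, `E₀` in degree `n`,
`X.X k` elsewhere. -/
noncomputable def eObj (p : E₀ ⟶ X.X n) (k : ℤ) : A :=
  if k = n - 1 then pullback p (X.d (n - 1) n) else if k = n then E₀ else X.X k

variable (p : E₀ ⟶ X.X n)

lemma eObj_eq_X {k : ℤ} (h1 : k ≠ n - 1) (h2 : k ≠ n) : eObj n X p k = X.X k := by
  rw [eObj, if_neg h1, if_neg h2]

lemma eObj_eq_P {k : ℤ} (h : k = n - 1) :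
    eObj n X p k = pullback p (X.d (n - 1) n) := by
  rw [eObj, if_pos h]

lemma eObj_eq_E {k : ℤ} (h : k = n) : eObj n X p k = E₀ := by
  rw [eObj, if_neg (by omega), if_pos h]

noncomputable def eD (k l : ℤ) : eObj n X p k ⟶ eObj n X p l :=
  if h : k + 1 = l then
    if h1 : k = n - 2 then
      eqToHom (eObj_eq_X n X p (by omega) (by omega)) ≫
        (pullback.lift (0 : X.X k ⟶ E₀) (X.d k (n - 1)) (by simp) : X.X k ⟶ pullback p (X.d (n - 1) n)) ≫
        eqToHom (eObj_eq_P n X p (by omega)).symm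
    else if h2 : k = n - 1 then
      eqToHom (eObj_eq_P n X p h2) ≫ pullback.fst p (X.d (n - 1) n) ≫
        eqToHom (eObj_eq_E n X p (by omega)).symm
    else if h3 : k = n then
      eqToHom (eObj_eq_E n X p h3) ≫ p ≫ X.d n l ≫
        eqToHom (eObj_eq_X n X p (by omega) (by omega)).symm
    else
      eqToHom (eObj_eq_X n X p h2 h3) ≫ X.d k l ≫
        eqToHom (eObj_eq_X n X p (by omega) (by omega)).symm
  else 0

lemma d_comp_eqToHom (X : CochainComplex A ℤ) {l l' : ℤ} (h : l = l') (k : ℤ)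
    (e : X.X l = X.X l') : X.d k l ≫ eqToHom e = X.d k l' := by
  subst h; simp

lemma eqToHom_comp_d (X : CochainComplex A ℤ) {k k' : ℤ} (h : k = k') (l : ℤ)
    (e : X.X k = X.X k') : eqToHom e ≫ X.d k' l = X.d k l := by
  subst h; simp

noncomputable abbrev eC : CochainComplex A ℤ where
  X := eObj n X p
  d := eD n X p
  shape k l hkl := dif_neg hkl
  d_comp_d' k l m hkl hlm := by
    have hkl' : k + 1 = l := hkl
    have hlm' : l + 1 = m := hlm
    unfold eD
    rw [dif_pos hkl', dif_pos hlm']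
    by_cases h1 : k = n - 2
    · simp only [eq_true h1, eq_false (show ¬ l = n - 2 by omega),
        eq_true (show l = n - 1 by omega), dite_true, dite_false]
      simp
    · by_cases h2 : k = n - 1
      · simp only [eq_false h1, eq_true h2, eq_false (show ¬ l = n - 2 by omega),
          eq_false (show ¬ l = n - 1 by omega), eq_true (show l = n by omega),
          dite_true, dite_false]
        simp [pullback.condition_assoc]
      · by_cases h3 : k = n
        · simp only [eq_false h1, eq_false h2, eq_true h3,
            eq_false (show ¬ l = n - 2 by omega), eq_false (show ¬ l = n - 1 by omega),
            eq_false (show ¬ l = n by omega), dite_true, dite_false]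
          simp
        · by_cases h4 : l = n - 2
          · simp only [eq_false h1, eq_false h2, eq_false h3, eq_true h4,
              dite_true, dite_false]
            have hz : X.d k l ≫ (pullback.lift (0 : X.X l ⟶ E₀) (X.d l (n - 1)) (by simp) :
                X.X l ⟶ pullback p (X.d (n - 1) n)) = 0 :=
              pullback.hom_ext (by simp) (by simp)
            simp [reassoc_of% hz]
          · simp only [eq_false h1, eq_false h2, eq_false h3, eq_false h4,
              eq_false (show ¬ l = n - 1 by omega), eq_false (show ¬ l = n by omega),
              dite_true, dite_false]
            simp

noncomputable def ePi : eC n X p ⟶ X where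
  f k :=
    if h1 : k = n - 1 then
      eqToHom (eObj_eq_P n X p h1) ≫ pullback.snd p (X.d (n - 1) n) ≫
        eqToHom (congrArg X.X h1).symm
    else if h2 : k = n then
      eqToHom (eObj_eq_E n X p h2) ≫ p ≫ eqToHom (congrArg X.X h2).symm
    else eqToHom (eObj_eq_X n X p h1 h2)
  comm' k l hkl := by
    have hkl' : k + 1 = l := hkl
    dsimp only [eC]
    unfold eD
    rw [dif_pos hkl']
    by_cases h1 : k = n - 2
    · simp only [eq_true h1, eq_false (show ¬ k = n - 1 by omega),
        eq_false (show ¬ k = n by omega), eq_true (show l = n - 1 by omega),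
        dite_true, dite_false]
      simp [d_comp_eqToHom X (show n - 1 = l by omega)]
    · by_cases h2 : k = n - 1
      · simp only [eq_false h1, eq_true h2, eq_false (show ¬ k = n by omega),
          eq_false (show ¬ l = n - 1 by omega), eq_true (show l = n by omega),
          dite_true, dite_false]
        simp [pullback.condition_assoc, d_comp_eqToHom X (show n = l by omega),
          eqToHom_comp_d X (show n - 1 = k by omega)]
      · by_cases h3 : k = n
        · simp only [eq_false h1, eq_false h2, eq_true h3,
            eq_false (show ¬ l = n - 1 by omega), eq_false (show ¬ l = n by omega),
            dite_true, dite_false]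
          simp [eqToHom_comp_d X (show n = k by omega)]
        · simp only [eq_false h1, eq_false h2, eq_false h3,
            eq_false (show ¬ l = n - 1 by omega), eq_false (show ¬ l = n by omega),
            dite_true, dite_false]
          simp

variable (i : Y ⟶ E₀) (w : i ≫ p = 0)

noncomputable def eIota : disk Y n ⟶ eC n X p where
  f k :=
    if h1 : k = n - 1 then
      eqToHom (disk_X_eq Y n (Or.inl h1)) ≫
        (pullback.lift i (0 : Y ⟶ X.X (n - 1)) (by simp [w]) :
          Y ⟶ pullback p (X.d (n - 1) n)) ≫
        eqToHom (eObj_eq_P n X p h1).symm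
    else if h2 : k = n then
      eqToHom (disk_X_eq Y n (Or.inr h2)) ≫ i ≫ eqToHom (eObj_eq_E n X p h2).symm
    else 0
  comm' k l hkl := by
    have hkl' : k + 1 = l := hkl
    dsimp only [eC]
    unfold eD
    rw [dif_pos hkl']
    by_cases h2 : k = n - 1
    · rw [disk_d_eq Y n h2 (show l = n by omega)]
      simp only [eq_true h2, eq_false (show ¬ k = n - 2 by omega),
        eq_false (show ¬ l = n - 1 by omega), eq_true (show l = n by omega),
        dite_true, dite_false]
      simp
    · rw [disk_d_eq_zero Y n (by tauto)]
      by_cases h3 : k = n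
      · simp only [eq_false h2, eq_true h3, eq_false (show ¬ k = n - 2 by omega),
          dite_true, dite_false]
        simp [reassoc_of% w]
      · simp only [eq_false h2, eq_false h3, dite_false]
        simp

lemma eIota_comp_ePi : eIota Y n X p i w ≫ ePi n X p = 0 := by
  ext k
  simp only [HomologicalComplex.comp_f, HomologicalComplex.zero_f_apply]
  dsimp [eIota, ePi]
  by_cases h1 : k = n - 1
  · simp only [eq_true h1, dite_true]
    simp
  · by_cases h2 : k = n
    · simp only [eq_false h1, eq_true h2, dite_true, dite_false]
      simp [reassoc_of% w]
    · simp only [eq_false h1, eq_false h2, dite_false]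
      simp

lemma e_shortExact (hse : (ShortComplex.mk i p w).ShortExact) :
    (ShortComplex.mk (eIota Y n X p i w) (ePi n X p)
      (eIota_comp_ePi Y n X p i w)).ShortExact := by
  apply HomologicalComplex.shortExact_of_degreewise_shortExact
  intro k
  by_cases h1 : k = n - 1
  · refine (ShortComplex.shortExact_iff_of_iso ?_).1
      (pullback_shortExact i p w hse (X.d (n - 1) n))
    refine ShortComplex.isoMk (eqToIso (disk_X_eq Y n (Or.inl h1)).symm)
      (eqToIso (eObj_eq_P n X p h1).symm) (eqToIso (congrArg X.X h1.symm)) ?_ ?_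
    · dsimp [ShortComplex.map, HomologicalComplex.eval, eIota]
      simp only [eq_true h1, dite_true]
      simp
    · dsimp [ShortComplex.map, HomologicalComplex.eval, ePi]
      simp only [eq_true h1, dite_true]
      simp
  · by_cases h2 : k = n
    · refine (ShortComplex.shortExact_iff_of_iso ?_).1 hse
      refine ShortComplex.isoMk (eqToIso (disk_X_eq Y n (Or.inr h2)).symm)
        (eqToIso (eObj_eq_E n X p h2).symm) (eqToIso (congrArg X.X h2.symm)) ?_ ?_
      · dsimp [ShortComplex.map, HomologicalComplex.eval, eIota]
        simp only [eq_false h1, eq_true h2, dite_true, dite_false]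
        simp
      · dsimp [ShortComplex.map, HomologicalComplex.eval, ePi]
        simp only [eq_false h1, eq_true h2, dite_true, dite_false]
        simp
    · have hiso : IsIso ((ePi n X p).f k) := by
        have : (ePi n X p).f k = eqToHom (eObj_eq_X n X p h1 h2) := by
          dsimp [ePi]
          simp only [eq_false h1, eq_false h2, dite_false]
        rw [this]
        infer_instance
      exact @shortExact_of_isZero_of_isIso A _ _ _ _ _ (disk_X_isZero Y n h1 h2) _ _ hiso _

end Aux

/-- Let `(𝒞, 𝒟)` be a cotorsion pair in an abelian category `A`, with `𝒞`
generating and `𝒟` cogenerating. If `X` is a complex which is left `Ext¹`-orthogonal in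
`Ch(A)` to the class `𝒟̃` of acyclic complexes with all cycle objects in `𝒟` (i.e. `X` lies
in `dg-𝒞̃`), then all components of `X` lie in `𝒞`. -/
theorem components_in_C_of_dgC
    {A : Type*} [Category A] [Abelian A] (𝒞 𝒟 : Set A)
    (hpair : IsCotorsionPair 𝒞 𝒟)
    (hgen : ∀ M : A, ∃ (c : A) (_ : c ∈ 𝒞) (p : c ⟶ M), Epi p)
    (hcogen : ∀ M : A, ∃ (d : A) (_ : d ∈ 𝒟) (i : M ⟶ d), Mono i)
    (X : CochainComplex A ℤ)
    (hX : ∀ Y : CochainComplex A ℤ,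
      (∀ n, Y.ExactAt n) → (∀ n, Y.cycles n ∈ 𝒟) → Ext1Zero X Y) :
    ∀ n, X.X n ∈ 𝒞 := by
  intro n
  refine (hpair.1 (X.X n)).2 ?_
  intro Y hY
  intro E₀ i p w hse
  have hD : Ext1Zero X (disk Y n) := by
    refine hX (disk Y n) (disk_exactAt Y n) ?_
    intro k
    rcases eq_or_ne k n with rfl | hk
    · exact mem_D_of_mem_of_iso hpair (diskCyclesIso Y k).symm hY
    · exact mem_D_of_isZero hpair (disk_cycles_isZero Y n hk)
  obtain ⟨r, hr⟩ := hD (eIota Y n X p i w) (ePi n X p) (eIota_comp_ePi Y n X p i w)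
    (e_shortExact Y n X p i w hse)
  refine ⟨eqToHom (eObj_eq_E n X p rfl).symm ≫ r.f n ≫
    eqToHom (disk_X_eq Y n (Or.inr rfl)), ?_⟩
  have h2 := congrArg (fun φ => HomologicalComplex.Hom.f φ n) hr
  simp only [HomologicalComplex.comp_f, HomologicalComplex.id_f] at h2
  have h3 : (eIota Y n X p i w).f n =
      eqToHom (disk_X_eq Y n (Or.inr rfl)) ≫ i ≫ eqToHom (eObj_eq_E n X p rfl).symm := by
    dsimp [eIota]
    simp only [eq_false (show ¬ (n : ℤ) = n - 1 by omega), eq_true (show (n : ℤ) = n from rfl),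
      dite_true, dite_false]
  rw [h3] at h2
  have h4 : i ≫ eqToHom (eObj_eq_E n X p rfl).symm ≫ r.f n ≫
      eqToHom (disk_X_eq Y n (Or.inr rfl)) =
      eqToHom (disk_X_eq Y n (Or.inr rfl)).symm ≫
        ((eqToHom (disk_X_eq Y n (Or.inr rfl)) ≫ i ≫ eqToHom (eObj_eq_E n X p rfl).symm) ≫
          r.f n) ≫ eqToHom (disk_X_eq Y n (Or.inr rfl)) := by
    simp
  rw [h4, h2]
  simp
end

section
/- Let F be a Frobenius category with class of projective-injective objects ω. Then the suspension functor of the stable category induces, for every acyclic complex with entries in ω and admissible cycle objects, equivalences of triangulated categories cosyz^0, syz^0 : K_ac(ω) → F/ω from the homotopy category of acyclic complexes of projective-injectives to the stable category, and these satisfy cosyz^0 ≅ Σ ∘ syz^0. -/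
open CategoryTheory Category Limits

universe v u

/-- The stable hom-relation on a category: two maps are identified when their difference
factors through a projective(-injective) object. -/
def stableRel (F : Type u) [Category.{v} F] [Preadditive F] : HomRel F :=
  fun {X Y} f g =>
    ∃ (P : F) (_ : Projective P) (a : X ⟶ P) (b : P ⟶ Y), f = g + a ≫ b

open scoped ZeroObject

universe w

section IntChain

variable {Cz : ℤ → Sort w} {R : ∀ i : ℤ, Cz i → Cz (i + 1) → Prop}

/-- Pairs of consecutive values together with the relation between them. -/
def ChainT (Cz : ℤ → Sort w) (R : ∀ i : ℤ, Cz i → Cz (i + 1) → Prop) (i : ℤ) :=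
  Σ' (c : Cz i) (c' : Cz (i + 1)), R i c c'

variable (n : ℤ) (base : ChainT Cz R n)
variable (up : ∀ i, n ≤ i → ∀ (c : Cz i), ∀ (c' : Cz (i + 1)), R i c c' →
    ∃ c'' : Cz (i + 1 + 1), R (i + 1) c' c'')
variable (down : ∀ i, i + 1 ≤ n → ∀ (c : Cz (i + 1)), ∀ (c' : Cz (i + 1 + 1)), R (i + 1) c c' →
    ∃ cm : Cz i, R i cm c)

noncomputable def chainUpAux : ∀ (k : ℕ) (i : ℤ), i = n + k → ChainT Cz R i
  | 0, i, h => cast (congrArg (ChainT Cz R) (show n = i by omega)) base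
  | (k + 1), i, h =>
      let p := chainUpAux k (n + k) rfl
      cast (congrArg (ChainT Cz R) (show n + (k : ℤ) + 1 = i by omega))
        ⟨p.2.1, Classical.choose (up (n + k) (by omega) p.1 p.2.1 p.2.2),
          Classical.choose_spec (up (n + k) (by omega) p.1 p.2.1 p.2.2)⟩

noncomputable def chainDownAux : ∀ (k : ℕ) (i : ℤ), i = n - k → ChainT Cz R i
  | 0, i, h => cast (congrArg (ChainT Cz R) (show n = i by omega)) base
  | (k + 1), i, h =>
      let p := chainDownAux k (i + 1) (by omega)
      ⟨Classical.choose (down i (by omega) p.1 p.2.1 p.2.2), p.1,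
        Classical.choose_spec (down i (by omega) p.1 p.2.1 p.2.2)⟩

lemma chainUpAux_congr (k k' : ℕ) (i : ℤ) (h : i = n + k) (h' : i = n + k') (e : k = k') :
    chainUpAux n base up k i h = chainUpAux n base up k' i h' := by
  subst e; rfl

lemma chainDownAux_congr (k k' : ℕ) (i : ℤ) (h : i = n - k) (h' : i = n - k') (e : k = k') :
    chainDownAux n base down k i h = chainDownAux n base down k' i h' := by
  subst e; rfl

lemma chainUpAux_cast (k : ℕ) (i : ℤ) (h : i = n + k) :
    chainUpAux n base up k i h =
      cast (congrArg (ChainT Cz R) (show n + (k : ℤ) = i by omega))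
        (chainUpAux n base up k (n + k) rfl) := by
  subst h; rfl

lemma chainUpAux_succ (k : ℕ) (i : ℤ) (h : i = n + k) (h' : i + 1 = n + (k + 1 : ℕ)) :
    (chainUpAux n base up (k + 1) (i + 1) h').1 = (chainUpAux n base up k i h).2.1 := by
  subst h
  rw [chainUpAux_cast n base up (k + 1) (n + (k : ℤ) + 1) h']
  simp only [chainUpAux]
  erw [cast_cast, cast_eq]

lemma chainDownAux_succ (k : ℕ) (i : ℤ) (h : i = n - (k + 1 : ℕ)) (h' : i + 1 = n - k) :
    (chainDownAux n base down (k + 1) i h).2.1 = (chainDownAux n base down k (i + 1) h').1 := by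
  simp only [chainDownAux]

include up down in
lemma exists_chain :
    ∃ H : ∀ i, Cz i, (∀ i, R i (H i) (H (i + 1))) ∧ H n = base.1 := by
  classical
  let G : ∀ i : ℤ, ChainT Cz R i := fun i =>
    if h : n ≤ i then chainUpAux n base up (i - n).toNat i (by omega)
    else chainDownAux n base down (n - i).toNat i (by omega)
  have Gup : ∀ (k : ℕ) (i : ℤ) (h : i = n + k), G i = chainUpAux n base up k i h := by
    intro k i h
    have hn : n ≤ i := by omega
    show dite _ _ _ = _
    rw [dif_pos hn]
    exact chainUpAux_congr n base up _ _ _ _ h (by omega)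
  have Gdown : ∀ (k : ℕ) (i : ℤ) (h : i = n - k), G i = chainDownAux n base down k i h := by
    intro k i h
    by_cases hn : n ≤ i
    · have hk : k = 0 := by omega
      subst hk
      show dite _ _ _ = _
      rw [dif_pos hn]
      rw [chainUpAux_congr n base up _ 0 _ (by omega) (by omega) (by omega)]
      rfl
    · show dite _ _ _ = _
      rw [dif_neg hn]
      exact chainDownAux_congr n base down _ _ _ _ h (by omega)
  have Gsucc : ∀ i : ℤ, (G (i + 1)).1 = (G i).2.1 := by
    intro i
    by_cases hn : n ≤ i
    · obtain ⟨k, e⟩ : ∃ k : ℕ, i = n + k := ⟨(i - n).toNat, by omega⟩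
      rw [Gup k i e, Gup (k + 1) (i + 1) (by omega)]
      exact chainUpAux_succ n base up k i e (by omega)
    · obtain ⟨k, e⟩ : ∃ k : ℕ, i = n - (k + 1 : ℕ) := ⟨(n - i - 1).toNat, by omega⟩
      rw [Gdown (k + 1) i e, Gdown k (i + 1) (by omega)]
      exact chainDownAux_succ n base down k i e (by omega)
  refine ⟨fun i => (G i).1, fun i => ?_, ?_⟩
  · show R i (G i).1 (G (i + 1)).1
    rw [Gsucc i]
    exact (G i).2.2
  · show (G n).1 = base.1
    rw [Gup 0 n (by omega)]
    rfl

end IntChain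


section Frobenius

variable {F : Type u} [Category.{v} F] [Abelian F]

lemma stableRel_congruence : Congruence (stableRel F) where
  equivalence := by
    intro X Y
    constructor
    · intro f
      exact ⟨0, inferInstance, 0, 0, by simp⟩
    · rintro f g ⟨P, hP, a, b, h⟩
      exact ⟨P, hP, a, -b, by rw [h]; simp⟩
    · rintro f g h ⟨P, hP, a, b, hab⟩ ⟨P', hP', a', b', hab'⟩
      letI := hP; letI := hP'
      refine ⟨P ⊞ P', inferInstance, biprod.lift a a', biprod.desc b b', ?_⟩
      rw [hab, hab', biprod.lift_desc]
      abel
  comp_left := by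
    rintro X Y Z f g g' ⟨P, hP, a, b, h⟩
    exact ⟨P, hP, f ≫ a, b, by rw [h]; simp⟩
  comp_right := by
    rintro X Y Z f f' g ⟨P, hP, a, b, h⟩
    exact ⟨P, hP, a, b ≫ g, by rw [h]; simp⟩

/-- `toCycles` agrees with the short-complex `toCycles`. -/
lemma epi_toCycles_of_exactAt (K : CochainComplex F ℤ) (i : ℤ) (h : K.ExactAt (i + 1)) :
    Epi (K.toCycles i (i + 1)) := by
  have hprev : (ComplexShape.up ℤ).prev (i + 1) = i :=
    (ComplexShape.up ℤ).prev_eq' (by simp)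
  have e : (K.XIsoOfEq hprev).hom ≫ K.toCycles i (i + 1) = (K.sc (i + 1)).toCycles := by
    apply (cancel_mono (K.iCycles (i + 1))).1
    refine ((Category.assoc _ _ _).trans ?_).trans (K.sc (i + 1)).toCycles_i.symm
    rw [HomologicalComplex.toCycles_i, HomologicalComplex.XIsoOfEq_hom_comp_d]
    rfl
  have hE : Epi (K.sc (i + 1)).toCycles := (h : (K.sc (i+1)).Exact).epi_toCycles
  exact @epi_of_epi_fac _ _ _ _ _ _ _ _ hE e

lemma iCycles_comp_eq_zero (K : CochainComplex F ℤ) (i : ℤ) (hK : K.ExactAt (i + 1)) {T : F}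
    (g : K.X (i + 1) ⟶ T) (hg : K.d i (i + 1) ≫ g = 0) :
    K.iCycles (i + 1) ≫ g = 0 := by
  haveI := epi_toCycles_of_exactAt K i hK
  rw [← cancel_epi (K.toCycles i (i + 1)), comp_zero, ← assoc,
    HomologicalComplex.toCycles_i, hg]

/-- Extend a map killing cycles over the next differential. -/
lemma exists_d_comp_eq (K : CochainComplex F ℤ) (j : ℤ) {T : F} [Injective T]
    (g : K.X j ⟶ T) (hg : K.iCycles j ≫ g = 0) (hK : K.ExactAt (j + 1)) :
    ∃ q : K.X (j + 1) ⟶ T, K.d j (j + 1) ≫ q = g := by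
  haveI := epi_toCycles_of_exactAt K j hK
  have hker : kernel.ι (K.toCycles j (j + 1)) ≫ g = 0 := by
    have h1 : kernel.ι (K.toCycles j (j + 1)) ≫ K.d j (j + 1) = 0 := by
      rw [← HomologicalComplex.toCycles_i, ← assoc, kernel.condition, zero_comp]
    have h2 : kernel.ι (K.toCycles j (j + 1)) =
        K.liftCycles (kernel.ι (K.toCycles j (j + 1))) (j + 1) (by simp) h1 ≫ K.iCycles j := by
      rw [HomologicalComplex.liftCycles_i]
    rw [h2, assoc, hg, comp_zero]
  refine ⟨Injective.factorThru (Abelian.epiDesc (K.toCycles j (j + 1)) g hker)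
    (K.iCycles (j + 1)), ?_⟩
  have : K.d j (j+1) = K.toCycles j (j+1) ≫ K.iCycles (j+1) := by
    rw [HomologicalComplex.toCycles_i]
  rw [this, assoc, Injective.comp_factorThru, Abelian.comp_epiDesc]

/-- Lift a map into cycles over the previous differential. -/
lemma exists_comp_d_eq (L : CochainComplex F ℤ) (i : ℤ) {T : F} [Projective T]
    (g : T ⟶ L.X (i + 1)) (hg : g ≫ L.d (i + 1) (i + 1 + 1) = 0) (hL : L.ExactAt (i + 1)) :
    ∃ q : T ⟶ L.X i, q ≫ L.d i (i + 1) = g := by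
  haveI := epi_toCycles_of_exactAt L i hL
  refine ⟨Projective.factorThru (L.liftCycles g (i + 1 + 1) (by simp) hg)
    (L.toCycles i (i + 1)), ?_⟩
  have : L.d i (i+1) = L.toCycles i (i+1) ≫ L.iCycles (i+1) := by
    rw [HomologicalComplex.toCycles_i]
  rw [this, ← assoc, Projective.factorThru_comp, HomologicalComplex.liftCycles_i]

variable {K L : CochainComplex F ℤ}

lemma stableRel_cyclesMap_of_homotopy (n : ℤ) (hLp : ∀ i, Projective (L.X i))
    {f g : K ⟶ L} (h : Homotopy f g) :
    stableRel F (HomologicalComplex.cyclesMap f n) (HomologicalComplex.cyclesMap g n) := by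
  refine ⟨L.X (n - 1), hLp (n - 1), K.iCycles n ≫ h.hom n (n - 1),
    L.liftCycles (L.d (n - 1) n) (n + 1) (by simp) (by simp), ?_⟩
  rw [← cancel_mono (L.iCycles n)]
  have hcomm := h.comm n
  rw [dNext_eq h.hom (show (ComplexShape.up ℤ).Rel n (n + 1) by simp),
    prevD_eq h.hom (show (ComplexShape.up ℤ).Rel (n - 1) n by simp)] at hcomm
  simp only [Preadditive.add_comp, assoc, HomologicalComplex.liftCycles_i,
    HomologicalComplex.cyclesMap_i, hcomm]
  simp [Preadditive.comp_add]
  abel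

/-- Fullness: any map on `n`-cycles lifts to a chain map. -/
lemma exists_hom_of_cyclesMap (hPI : ∀ X : F, Projective X ↔ Injective X)
    (hK : ∀ i, K.ExactAt i) (hL : ∀ i, L.ExactAt i)
    (hKp : ∀ i, Projective (K.X i)) (hLp : ∀ i, Projective (L.X i))
    (n : ℤ) (φ : K.cycles n ⟶ L.cycles n) :
    ∃ f : K ⟶ L, HomologicalComplex.cyclesMap f n = φ := by
  haveI : ∀ i : ℤ, Injective (L.X i) := fun i => (hPI _).1 (hLp i)
  haveI : ∀ i : ℤ, Projective (K.X i) := hKp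
  set Cz : ℤ → Type v := fun i => K.X i ⟶ L.X i with hCz
  set R : ∀ i : ℤ, Cz i → Cz (i + 1) → Prop :=
    fun i c c' => K.d i (i + 1) ≫ c' = c ≫ L.d i (i + 1) with hR
  have hbase : ∃ b : ChainT Cz R n, K.iCycles n ≫ b.1 = φ ≫ L.iCycles n := by
    set c0 : K.X n ⟶ L.X n := Injective.factorThru (φ ≫ L.iCycles n) (K.iCycles n) with hc0
    have h0 : K.iCycles n ≫ c0 = φ ≫ L.iCycles n := Injective.comp_factorThru _ _
    have h0d : K.iCycles n ≫ c0 ≫ L.d n (n + 1) = 0 := by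
      rw [← assoc, h0, assoc, HomologicalComplex.iCycles_d, comp_zero]
    obtain ⟨c1, hc1⟩ := exists_d_comp_eq K n (c0 ≫ L.d n (n + 1)) h0d (hK (n + 1))
    exact ⟨⟨c0, c1, hc1⟩, h0⟩
  obtain ⟨base, hbase1⟩ := hbase
  have up : ∀ i, n ≤ i → ∀ (c : Cz i), ∀ (c' : Cz (i + 1)), R i c c' →
      ∃ c'' : Cz (i + 1 + 1), R (i + 1) c' c'' := by
    intro i _ c c' hcc
    have hd : K.d i (i + 1) ≫ c' ≫ L.d (i + 1) (i + 1 + 1) = 0 := by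
      rw [← assoc, hcc, assoc, HomologicalComplex.d_comp_d, comp_zero]
    exact exists_d_comp_eq K (i + 1) (c' ≫ L.d (i + 1) (i + 1 + 1))
      (iCycles_comp_eq_zero K i (hK (i + 1)) _ hd) (hK (i + 1 + 1))
  have down : ∀ i, i + 1 ≤ n → ∀ (c : Cz (i + 1)), ∀ (c' : Cz (i + 1 + 1)), R (i + 1) c c' →
      ∃ cm : Cz i, R i cm c := by
    intro i _ c c' hcc
    have hd : (K.d i (i + 1) ≫ c) ≫ L.d (i + 1) (i + 1 + 1) = 0 := by
      rw [assoc, ← hcc, ← assoc, HomologicalComplex.d_comp_d, zero_comp]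
    obtain ⟨q, hq⟩ := exists_comp_d_eq L i (K.d i (i + 1) ≫ c) hd (hL (i + 1))
    exact ⟨q, hq.symm⟩
  obtain ⟨H, hchain, hHn⟩ := exists_chain n base up down
  refine ⟨{ f := H, comm' := ?_ }, ?_⟩
  · intro i j hij
    obtain rfl : i + 1 = j := hij
    exact (hchain i).symm
  · rw [← cancel_mono (L.iCycles n), HomologicalComplex.cyclesMap_i]
    show K.iCycles n ≫ H n = φ ≫ L.iCycles n
    rw [hHn, hbase1]

/-- Faithfulness: a chain map whose `n`-cycles map factors through a
projective-injective is nullhomotopic. -/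
lemma homotopy_of_cyclesMap_factors (hPI : ∀ X : F, Projective X ↔ Injective X)
    (hK : ∀ i, K.ExactAt i) (hL : ∀ i, L.ExactAt i)
    (hKp : ∀ i, Projective (K.X i)) (hLp : ∀ i, Projective (L.X i))
    (n : ℤ) {f : K ⟶ L} {P : F} (hP : Projective P)
    (a : K.cycles n ⟶ P) (b : P ⟶ L.cycles n)
    (hab : HomologicalComplex.cyclesMap f n = a ≫ b) :
    Nonempty (Homotopy f (0 : K ⟶ L)) := by
  haveI : ∀ i : ℤ, Injective (L.X i) := fun i => (hPI _).1 (hLp i)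
  haveI : ∀ i : ℤ, Projective (K.X i) := hKp
  haveI : Projective P := hP
  haveI : Injective P := (hPI _).1 hP
  obtain ⟨m, rfl⟩ : ∃ m, n = m + 1 := ⟨n - 1, by omega⟩
  set Cz : ℤ → Type v := fun i => K.X (i + 1) ⟶ L.X i with hCz
  set R : ∀ i : ℤ, Cz i → Cz (i + 1) → Prop :=
    fun i c c' => f.f (i + 1) = K.d (i + 1) (i + 1 + 1) ≫ c' + c ≫ L.d i (i + 1) with hR
  haveI : Epi (L.toCycles m (m + 1)) := epi_toCycles_of_exactAt L m (hL (m + 1))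
  have hbase : Nonempty (ChainT Cz R m) := by
    set at' : K.X (m + 1) ⟶ P := Injective.factorThru a (K.iCycles (m + 1)) with hat
    have hat' : K.iCycles (m + 1) ≫ at' = a := Injective.comp_factorThru _ _
    set bt : P ⟶ L.X m := Projective.factorThru b (L.toCycles m (m + 1)) with hbt
    have hbt' : bt ≫ L.toCycles m (m + 1) = b := Projective.factorThru_comp _ _
    set g : K.X (m + 1) ⟶ L.X (m + 1) := f.f (m + 1) - (at' ≫ bt) ≫ L.d m (m + 1) with hg
    have hdec : L.d m (m + 1) = L.toCycles m (m + 1) ≫ L.iCycles (m + 1) := by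
      rw [HomologicalComplex.toCycles_i]
    have hgz : K.iCycles (m + 1) ≫ g = 0 := by
      rw [hg, Preadditive.comp_sub]
      have e1 : K.iCycles (m + 1) ≫ f.f (m + 1) =
          HomologicalComplex.cyclesMap f (m + 1) ≫ L.iCycles (m + 1) :=
        (HomologicalComplex.cyclesMap_i f (m + 1)).symm
      have e2 : K.iCycles (m + 1) ≫ (at' ≫ bt) ≫ L.d m (m + 1) =
          (a ≫ b) ≫ L.iCycles (m + 1) := by
        rw [hdec]
        slice_lhs 1 2 => rw [hat']
        slice_lhs 2 3 => rw [hbt']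
        rw [assoc]
      rw [e1, e2, hab, sub_self]
    obtain ⟨c1, hc1⟩ := exists_d_comp_eq K (m + 1) g hgz (hK (m + 1 + 1))
    refine ⟨⟨at' ≫ bt, c1, ?_⟩⟩
    show f.f (m + 1) = K.d (m + 1) (m + 1 + 1) ≫ c1 + (at' ≫ bt) ≫ L.d m (m + 1)
    rw [hc1, hg]
    abel
  obtain ⟨base⟩ := hbase
  have up : ∀ i, m ≤ i → ∀ (c : Cz i), ∀ (c' : Cz (i + 1)), R i c c' →
      ∃ c'' : Cz (i + 1 + 1), R (i + 1) c' c'' := by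
    intro i _ c c' hcc
    set g : K.X (i + 1 + 1) ⟶ L.X (i + 1 + 1) :=
      f.f (i + 1 + 1) - c' ≫ L.d (i + 1) (i + 1 + 1) with hg
    have hdg : K.d (i + 1) (i + 1 + 1) ≫ g = 0 := by
      rw [hg, Preadditive.comp_sub, ← f.comm (i + 1) (i + 1 + 1)]
      rw [show f.f (i + 1) = K.d (i + 1) (i + 1 + 1) ≫ c' + c ≫ L.d i (i + 1) from hcc]
      simp [Preadditive.add_comp]
    have hgz : K.iCycles (i + 1 + 1) ≫ g = 0 :=
      iCycles_comp_eq_zero K (i + 1) (hK (i + 1 + 1)) g hdg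
    obtain ⟨c'', hc''⟩ := exists_d_comp_eq K (i + 1 + 1) g hgz (hK (i + 1 + 1 + 1))
    refine ⟨c'', ?_⟩
    show f.f (i + 1 + 1) = K.d (i + 1 + 1) (i + 1 + 1 + 1) ≫ c'' + c' ≫ L.d (i + 1) (i + 1 + 1)
    rw [hc'', hg]
    abel
  have down : ∀ i, i + 1 ≤ m → ∀ (c : Cz (i + 1)), ∀ (c' : Cz (i + 1 + 1)), R (i + 1) c c' →
      ∃ cm : Cz i, R i cm c := by
    intro i _ c c' hcc
    set g : K.X (i + 1) ⟶ L.X (i + 1) := f.f (i + 1) - K.d (i + 1) (i + 1 + 1) ≫ c with hg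
    have hgd : g ≫ L.d (i + 1) (i + 1 + 1) = 0 := by
      rw [hg, Preadditive.sub_comp, f.comm (i + 1) (i + 1 + 1)]
      rw [show f.f (i + 1 + 1) = K.d (i + 1 + 1) (i + 1 + 1 + 1) ≫ c' + c ≫ L.d (i + 1) (i + 1 + 1)
        from hcc]
      simp [Preadditive.comp_add]
    obtain ⟨q, hq⟩ := exists_comp_d_eq L i g hgd (hL (i + 1))
    refine ⟨q, ?_⟩
    show f.f (i + 1) = K.d (i + 1) (i + 1 + 1) ≫ c + q ≫ L.d i (i + 1)
    rw [hq, hg]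
    abel
  obtain ⟨H, hchain, -⟩ := exists_chain m base up down
  refine ⟨{ hom := fun i j => if h : i = j + 1 then eqToHom (congrArg K.X h) ≫ H j else 0,
            zero := ?_, comm := ?_ }⟩
  · intro i j hij
    rw [dif_neg]
    intro h
    exact hij (by simpa using h.symm)
  · intro i
    obtain ⟨j, rfl⟩ : ∃ j, i = j + 1 := ⟨i - 1, by omega⟩
    rw [dNext_eq _ (show (ComplexShape.up ℤ).Rel (j + 1) (j + 1 + 1) by simp),
      prevD_eq _ (show (ComplexShape.up ℤ).Rel j (j + 1) by simp)]
    rw [dif_pos rfl, dif_pos rfl]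
    simp only [eqToHom_refl, id_comp, HomologicalComplex.zero_f_apply, add_zero]
    exact hchain j

end Frobenius

section Glue

variable {F : Type u} [Category.{v} F] [Abelian F]

/-- Entries of the splice of a chain complex and a cochain complex. -/
def glueX (Cc : ChainComplex F ℕ) (Dc : CochainComplex F ℕ) : ℤ → F
  | Int.ofNat k => Dc.X k
  | Int.negSucc k => Cc.X k

/-- Differentials of the splice. -/
def glueD (Cc : ChainComplex F ℕ) (Dc : CochainComplex F ℕ) (seam : Cc.X 0 ⟶ Dc.X 0) :
    ∀ i j : ℤ, glueX Cc Dc i ⟶ glueX Cc Dc j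
  | Int.ofNat a, Int.ofNat b => Dc.d a b
  | Int.negSucc a, Int.negSucc b => Cc.d a b
  | Int.negSucc a, Int.ofNat b =>
      (match a, b with
        | 0, 0 => seam
        | 0, _ + 1 => 0
        | _ + 1, _ => 0)
  | Int.ofNat _, Int.negSucc _ => 0

/-- The splice of a projective resolution and an injective resolution. -/
noncomputable def glue (Cc : ChainComplex F ℕ) (Dc : CochainComplex F ℕ)
    (seam : Cc.X 0 ⟶ Dc.X 0) (h1 : Cc.d 1 0 ≫ seam = 0) (h2 : seam ≫ Dc.d 0 1 = 0) :
    CochainComplex F ℤ where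
  X := glueX Cc Dc
  d := glueD Cc Dc seam
  shape := by
    rintro (a | a) (b | b) h
    · refine Dc.shape a b fun hr => h ?_
      simp only [ComplexShape.up_Rel, Int.ofNat_eq_natCast] at hr ⊢
      omega
    · rfl
    · rcases a with _ | a
      · rcases b with _ | b
        · exact absurd (by decide) h
        · rfl
      · rfl
    · refine Cc.shape a b fun hr => h ?_
      simp only [ComplexShape.down_Rel] at hr
      simp only [ComplexShape.up_Rel, Int.negSucc_eq, Int.ofNat_eq_natCast]
      omega
  d_comp_d' := by
    rintro (a | a) (b | b) (c | c) hab hbc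
    · exact Dc.d_comp_d a b c
    · simp only [ComplexShape.up_Rel, Int.negSucc_eq, Int.ofNat_eq_natCast] at hbc; omega
    · show (0 : glueX Cc Dc (Int.ofNat a) ⟶ _) ≫ _ = 0
      rw [zero_comp]
    · show (0 : glueX Cc Dc (Int.ofNat a) ⟶ _) ≫ _ = 0
      rw [zero_comp]
    · -- negSucc a, ofNat b, ofNat c
      obtain rfl : a = 0 := by simp only [ComplexShape.up_Rel, Int.negSucc_eq, Int.ofNat_eq_natCast] at hab; omega
      obtain rfl : b = 0 := by simp only [ComplexShape.up_Rel, Int.negSucc_eq, Int.ofNat_eq_natCast] at hab; omega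
      obtain rfl : c = 1 := by simp only [ComplexShape.up_Rel, Int.negSucc_eq, Int.ofNat_eq_natCast] at hbc; omega
      exact h2
    · simp only [ComplexShape.up_Rel, Int.negSucc_eq, Int.ofNat_eq_natCast] at hbc; omega
    · -- negSucc a, negSucc b, ofNat c
      obtain rfl : b = 0 := by simp only [ComplexShape.up_Rel, Int.negSucc_eq, Int.ofNat_eq_natCast] at hbc; omega
      obtain rfl : c = 0 := by simp only [ComplexShape.up_Rel, Int.negSucc_eq, Int.ofNat_eq_natCast] at hbc; omega
      obtain rfl : a = 1 := by simp only [ComplexShape.up_Rel, Int.negSucc_eq, Int.ofNat_eq_natCast] at hab; omega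
      exact h1
    · exact Cc.d_comp_d a b c

end Glue

section GlueLemmas

variable {F : Type u} [Category.{v} F] [Abelian F]

lemma exact_precomp_epi {X Y Z W : F} (e : X ⟶ Y) [Epi e] (f : Y ⟶ Z) (g : Z ⟶ W)
    (hfg : f ≫ g = 0) (h : (ShortComplex.mk f g hfg).Exact) :
    (ShortComplex.mk (e ≫ f) g (by rw [assoc, hfg, comp_zero])).Exact := by
  let φ : ShortComplex.mk (e ≫ f) g (by rw [assoc, hfg, comp_zero]) ⟶ ShortComplex.mk f g hfg :=
    { τ₁ := e, τ₂ := 𝟙 _, τ₃ := 𝟙 _, comm₁₂ := by simp, comm₂₃ := by simp }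
  haveI : Epi φ.τ₁ := (inferInstance : Epi e)
  haveI : IsIso φ.τ₂ := (inferInstance : IsIso (𝟙 Z))
  haveI : Mono φ.τ₃ := (inferInstance : Mono (𝟙 W))
  exact (ShortComplex.exact_iff_of_epi_of_isIso_of_mono φ).2 h

lemma exact_postcomp_mono {X Y Z W : F} (f : X ⟶ Y) (g : Y ⟶ Z) (m : Z ⟶ W) [Mono m]
    (hfg : f ≫ g = 0) (h : (ShortComplex.mk f g hfg).Exact) :
    (ShortComplex.mk f (g ≫ m) (by rw [← assoc, hfg, zero_comp])).Exact := by
  let φ : ShortComplex.mk f g hfg ⟶ ShortComplex.mk f (g ≫ m) (by rw [← assoc, hfg, zero_comp]) :=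
    { τ₁ := 𝟙 _, τ₂ := 𝟙 _, τ₃ := m, comm₁₂ := by simp, comm₂₃ := by simp }
  haveI : Epi φ.τ₁ := (inferInstance : Epi (𝟙 X))
  haveI : IsIso φ.τ₂ := (inferInstance : IsIso (𝟙 Y))
  haveI : Mono φ.τ₃ := (inferInstance : Mono m)
  exact (ShortComplex.exact_iff_of_epi_of_isIso_of_mono φ).1 h

lemma glue_exactAt (Cc : ChainComplex F ℕ) (Dc : CochainComplex F ℕ)
    (seam : Cc.X 0 ⟶ Dc.X 0) (h1 : Cc.d 1 0 ≫ seam = 0) (h2 : seam ≫ Dc.d 0 1 = 0)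
    (hD : ∀ k : ℕ, (ShortComplex.mk (Dc.d k (k + 1)) (Dc.d (k + 1) (k + 2))
      (Dc.d_comp_d _ _ _)).Exact)
    (hC : ∀ k : ℕ, (ShortComplex.mk (Cc.d (k + 2) (k + 1)) (Cc.d (k + 1) k)
      (Cc.d_comp_d _ _ _)).Exact)
    (hs1 : (ShortComplex.mk (Cc.d 1 0) seam h1).Exact)
    (hs2 : (ShortComplex.mk seam (Dc.d 0 1) h2).Exact) :
    ∀ i : ℤ, (glue Cc Dc seam h1 h2).ExactAt i := by
  rintro (k | k)
  · rcases k with _ | k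
    · rw [HomologicalComplex.exactAt_iff' _ (Int.negSucc 0) (Int.ofNat 0) (Int.ofNat 1)
        ((ComplexShape.up ℤ).prev_eq' (by decide)) ((ComplexShape.up ℤ).next_eq' (by decide))]
      exact hs2
    · rw [HomologicalComplex.exactAt_iff' _ (Int.ofNat k) (Int.ofNat (k + 1)) (Int.ofNat (k + 2))
        ((ComplexShape.up ℤ).prev_eq' (by simp [ComplexShape.up_Rel, Int.ofNat_eq_natCast]; try omega))
        ((ComplexShape.up ℤ).next_eq' (by simp [ComplexShape.up_Rel, Int.ofNat_eq_natCast]; try omega))]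
      exact hD k
  · rcases k with _ | k
    · rw [HomologicalComplex.exactAt_iff' _ (Int.negSucc 1) (Int.negSucc 0) (Int.ofNat 0)
        ((ComplexShape.up ℤ).prev_eq' (by decide)) ((ComplexShape.up ℤ).next_eq' (by decide))]
      exact hs1
    · rw [HomologicalComplex.exactAt_iff' _ (Int.negSucc (k + 2)) (Int.negSucc (k + 1))
        (Int.negSucc k)
        ((ComplexShape.up ℤ).prev_eq' (by simp [ComplexShape.up_Rel, Int.negSucc_eq]; try omega))
        ((ComplexShape.up ℤ).next_eq' (by simp [ComplexShape.up_Rel, Int.negSucc_eq]; try omega))]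
      exact hC k

end GlueLemmas

section CompleteRes

variable {F : Type u} [Category.{v} F] [Abelian F] [EnoughProjectives F] [EnoughInjectives F]

noncomputable def prRes (A : F) : ProjectiveResolution A :=
  (HasProjectiveResolution.out (Z := A)).some

noncomputable def injRes (A : F) : InjectiveResolution A :=
  (HasInjectiveResolution.out (Z := A)).some

/-- The augmentation map of a projective resolution. -/
noncomputable def pzero (A : F) : (prRes A).complex.X 0 ⟶ A := (prRes A).π.f 0

/-- The coaugmentation map of an injective resolution. -/
noncomputable def izero (A : F) : A ⟶ (injRes A).cocomplex.X 0 := (injRes A).ι.f 0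

instance (A : F) : Epi (pzero A) := (inferInstance : Epi ((prRes A).π.f 0))
instance (A : F) : Mono (izero A) := (inferInstance : Mono ((injRes A).ι.f 0))

noncomputable def seam0 (A : F) : (prRes A).complex.X 0 ⟶ (injRes A).cocomplex.X 0 :=
  pzero A ≫ izero A

lemma seam0_left (A : F) : (prRes A).complex.d 1 0 ≫ seam0 A = 0 := by
  rw [seam0, ← assoc, show (prRes A).complex.d 1 0 ≫ pzero A = 0 from
    (prRes A).complex_d_comp_π_f_zero, zero_comp]

lemma seam0_right (A : F) : seam0 A ≫ (injRes A).cocomplex.d 0 1 = 0 := by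
  rw [seam0, assoc, show izero A ≫ (injRes A).cocomplex.d 0 1 = 0 from
    (injRes A).ι_f_zero_comp_complex_d, comp_zero]

lemma seam0_exact_left (A : F) :
    (ShortComplex.mk ((prRes A).complex.d 1 0) (seam0 A) (seam0_left A)).Exact :=
  exact_postcomp_mono ((prRes A).complex.d 1 0) (pzero A) (izero A)
    ((prRes A).complex_d_comp_π_f_zero) ((prRes A).exact₀)

lemma seam0_exact_right (A : F) :
    (ShortComplex.mk (seam0 A) ((injRes A).cocomplex.d 0 1) (seam0_right A)).Exact :=
  exact_precomp_epi (pzero A) (izero A) ((injRes A).cocomplex.d 0 1)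
    ((injRes A).ι_f_zero_comp_complex_d) ((injRes A).exact₀)

/-- The complete resolution of `A` whose `0`-cycles are `A`. -/
noncomputable def res0 (A : F) : CochainComplex F ℤ :=
  glue (prRes A).complex (injRes A).cocomplex (seam0 A) (seam0_left A) (seam0_right A)

lemma res0_exactAt (A : F) : ∀ i : ℤ, (res0 A).ExactAt i :=
  glue_exactAt _ _ _ _ _ (fun k => (injRes A).exact_succ k) (fun k => (prRes A).exact_succ k)
    (seam0_exact_left A) (seam0_exact_right A)

lemma res0_projective (hPI : ∀ X : F, Projective X ↔ Injective X) (A : F) :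
    ∀ i : ℤ, Projective ((res0 A).X i) := by
  rintro (k | k)
  · exact (hPI _).2 (inferInstance : Injective ((injRes A).cocomplex.X k))
  · exact (inferInstance : Projective ((prRes A).complex.X k))

noncomputable def res0CyclesIso (A : F) : A ≅ (res0 A).cycles (0 : ℤ) := by
  have hk : izero A ≫ (res0 A).d (0 : ℤ) (1 : ℤ) = 0 :=
    (injRes A).ι_f_zero_comp_complex_d
  set u : A ⟶ (res0 A).cycles (0 : ℤ) :=
    (res0 A).liftCycles (izero A) (1 : ℤ) ((ComplexShape.up ℤ).next_eq' (by decide)) hk with hu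
  have hui : u ≫ (res0 A).iCycles 0 = izero A := (res0 A).liftCycles_i _ _ _ _
  haveI : Mono u := by
    haveI hm : Mono (izero A) := inferInstance
    exact @mono_of_mono_fac _ _ _ _ _ _ _ _ hm hui
  have e : (res0 A).toCycles (-1 : ℤ) (0 : ℤ) = pzero A ≫ u := by
    apply (cancel_mono ((res0 A).iCycles 0)).1
    rw [HomologicalComplex.toCycles_i]
    exact (show (res0 A).d (-1) 0 = pzero A ≫ izero A from rfl).trans
      ((congrArg (fun t => pzero A ≫ t) hui).symm.trans (assoc _ _ _).symm)
  haveI : Epi ((res0 A).toCycles (-1 : ℤ) (0 : ℤ)) :=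
    epi_toCycles_of_exactAt (res0 A) (-1) (res0_exactAt A _)
  haveI : Epi (pzero A ≫ u) := by rw [← e]; exact this
  haveI : Epi u := epi_of_epi (pzero A) u
  haveI : IsIso u := isIso_of_mono_of_epi u
  exact asIso u

/-- Reindexed projective resolution, with `P (k+1)` in degree `k`. -/
noncomputable def shiftChain (Pc : ChainComplex F ℕ) : ChainComplex F ℕ where
  X k := Pc.X (k + 1)
  d i j := Pc.d (i + 1) (j + 1)
  shape i j h := Pc.shape _ _ (fun hr => h (by
    simp only [ComplexShape.down_Rel] at hr ⊢; omega))
  d_comp_d' i j k _ _ := Pc.d_comp_d _ _ _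

/-- Reindexed injective resolution, with `P0` added in degree `0`. -/
noncomputable def shiftCo (P0 : F) (Ic : CochainComplex F ℕ) (s : P0 ⟶ Ic.X 0)
    (hs : s ≫ Ic.d 0 1 = 0) : CochainComplex F ℕ where
  X k := match k with
    | 0 => P0
    | (k + 1) => Ic.X k
  d i j := match i, j with
    | 0, 1 => s
    | (a + 1), (b + 1) => Ic.d a b
    | 0, 0 => 0
    | 0, (_ + 2) => 0
    | (_ + 1), 0 => 0
  shape := by
    rintro (_ | a) (_ | b) h
    · rfl
    · rcases b with _ | b
      · exact absurd rfl h
      · rfl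
    · rfl
    · exact Ic.shape a b (fun hr => h (by
        simp only [ComplexShape.up_Rel] at hr ⊢; omega))
  d_comp_d' := by
    rintro i j k hij hjk
    simp only [ComplexShape.up_Rel] at hij hjk
    subst hij; subst hjk
    rcases i with _ | a
    · exact hs
    · exact Ic.d_comp_d a (a + 1) (a + 2)

/-- The complete resolution of `A` whose `1`-cycles are `A`. -/
noncomputable def res1 (A : F) : CochainComplex F ℤ :=
  glue (shiftChain (prRes A).complex)
    (shiftCo ((prRes A).complex.X 0) (injRes A).cocomplex (seam0 A) (seam0_right A))
    ((prRes A).complex.d 1 0)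
    ((prRes A).complex.d_comp_d 2 1 0)
    (seam0_left A)

lemma res1_exactAt (A : F) : ∀ i : ℤ, (res1 A).ExactAt i := by
  refine glue_exactAt _ _ _ _ _ ?_ (fun k => (prRes A).exact_succ (k + 1)) ((prRes A).exact_succ 0)
    (seam0_exact_left A)
  rintro (_ | k)
  · exact seam0_exact_right A
  · exact (injRes A).exact_succ k

lemma res1_projective (hPI : ∀ X : F, Projective X ↔ Injective X) (A : F) :
    ∀ i : ℤ, Projective ((res1 A).X i) := by
  rintro (k | k)
  · rcases k with _ | k
    · exact (inferInstance : Projective ((prRes A).complex.X 0))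
    · exact (hPI _).2 (inferInstance : Injective ((injRes A).cocomplex.X k))
  · exact (inferInstance : Projective ((prRes A).complex.X (k + 1)))

noncomputable def res1CyclesIso (A : F) : A ≅ (res1 A).cycles (1 : ℤ) := by
  have hk : izero A ≫ (res1 A).d (1 : ℤ) (2 : ℤ) = 0 :=
    (injRes A).ι_f_zero_comp_complex_d
  set u : A ⟶ (res1 A).cycles (1 : ℤ) :=
    (res1 A).liftCycles (izero A) (2 : ℤ) ((ComplexShape.up ℤ).next_eq' (by decide)) hk with hu
  have hui : u ≫ (res1 A).iCycles 1 = izero A := (res1 A).liftCycles_i _ _ _ _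
  haveI : Mono u := by
    haveI hm : Mono (izero A) := inferInstance
    exact @mono_of_mono_fac _ _ _ _ _ _ _ _ hm hui
  have e : (res1 A).toCycles (0 : ℤ) (1 : ℤ) = pzero A ≫ u := by
    apply (cancel_mono ((res1 A).iCycles 1)).1
    rw [HomologicalComplex.toCycles_i]
    exact (show (res1 A).d 0 1 = pzero A ≫ izero A from rfl).trans
      ((congrArg (fun t => pzero A ≫ t) hui).symm.trans (assoc _ _ _).symm)
  haveI : Epi ((res1 A).toCycles (0 : ℤ) (1 : ℤ)) :=
    epi_toCycles_of_exactAt (res1 A) 0 (res1_exactAt A _)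
  haveI : Epi (pzero A ≫ u) := by rw [← e]; exact this
  haveI : Epi u := epi_of_epi (pzero A) u
  haveI : IsIso u := isIso_of_mono_of_epi u
  exact asIso u

end CompleteRes

section Functor

variable (F : Type u) [Category.{v} F] [Abelian F]

/-- The homotopy category of acyclic complexes of projective-injective objects. -/
abbrev AcSub := ObjectProperty.FullSubcategory (fun K : HomotopyCategory F (ComplexShape.up ℤ) =>
  (∀ n, (K.as).ExactAt n) ∧ (∀ n, Projective ((K.as).X n)))

variable {F}

/-- The `n`-th syzygy functor from the homotopy category of acyclic complexes of
projective-injectives to the stable category. -/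
noncomputable def syzN (n : ℤ) : AcSub F ⥤ CategoryTheory.Quotient (stableRel F) where
  obj K := (CategoryTheory.Quotient.functor (stableRel F)).obj ((K.obj.as).cycles n)
  map {K L} φ := Quot.liftOn φ.hom
    (fun f => (CategoryTheory.Quotient.functor (stableRel F)).map
      (HomologicalComplex.cyclesMap f n))
    (by
      rintro f g ⟨_, _, u, m₁, m₂, v, ⟨h⟩⟩
      refine CategoryTheory.Quotient.sound _ (stableRel_cyclesMap_of_homotopy n L.property.2 ?_)
      exact (Homotopy.ofEq (assoc u m₁ v).symm).trans
        ((((h.compLeft u).compRight v).trans (Homotopy.ofEq (assoc u m₂ v)))))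
  map_id K := by
    show (CategoryTheory.Quotient.functor (stableRel F)).map
      (HomologicalComplex.cyclesMap (𝟙 K.obj.as) n) = _
    rw [HomologicalComplex.cyclesMap_id]
    exact (CategoryTheory.Quotient.functor (stableRel F)).map_id _
  map_comp {K L M} φ ψ := by
    obtain ⟨φ⟩ := φ
    obtain ⟨ψ⟩ := ψ
    induction φ using Quot.ind with
    | _ f =>
    induction ψ using Quot.ind with
    | _ g =>
    show (CategoryTheory.Quotient.functor (stableRel F)).map
        (HomologicalComplex.cyclesMap (f ≫ g) n) = _
    rw [HomologicalComplex.cyclesMap_comp, Functor.map_comp]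

variable (hPI : ∀ X : F, Projective X ↔ Injective X)

include hPI in
lemma syzN_faithful (n : ℤ) : (syzN (F := F) n).Faithful where
  map_injective {K L} {φ ψ} h := by
    haveI : Congruence (stableRel F) := stableRel_congruence
    obtain ⟨φ⟩ := φ
    obtain ⟨ψ⟩ := ψ
    induction φ using Quot.ind with
    | _ f =>
    induction ψ using Quot.ind with
    | _ g =>
    have h' : stableRel F (HomologicalComplex.cyclesMap f n)
        (HomologicalComplex.cyclesMap g n) :=
      (CategoryTheory.Quotient.functor_map_eq_iff (stableRel F) _ _).1 h
    obtain ⟨P, hP, a, b, hab⟩ := h'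
    have hD : HomologicalComplex.cyclesMap (f - g) n = a ≫ b := by
      have hab' : a ≫ b = HomologicalComplex.cyclesMap f n - HomologicalComplex.cyclesMap g n := by
        rw [hab]; abel
      rw [hab', ← cancel_mono ((L.obj.as).iCycles n), HomologicalComplex.cyclesMap_i,
        Preadditive.sub_comp, HomologicalComplex.cyclesMap_i, HomologicalComplex.cyclesMap_i]
      simp [Preadditive.comp_sub]
    obtain ⟨H⟩ := homotopy_of_cyclesMap_factors hPI K.property.1 L.property.1
      K.property.2 L.property.2 n hP a b hD
    have hfg : Homotopy f g := Homotopy.equivSubZero.symm H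
    exact congrArg InducedCategory.Hom.mk (HomotopyCategory.eq_of_homotopy f g hfg)

include hPI in
lemma syzN_full (n : ℤ) : (syzN (F := F) n).Full where
  map_surjective {K L} ψ := by
    obtain ⟨φ', hφ'⟩ := (CategoryTheory.Quotient.functor (stableRel F)).map_surjective ψ
    obtain ⟨f, hf⟩ := exists_hom_of_cyclesMap hPI K.property.1 L.property.1
      K.property.2 L.property.2 n φ'
    refine ⟨⟨Quot.mk _ f⟩, ?_⟩
    show (CategoryTheory.Quotient.functor (stableRel F)).map
      (HomologicalComplex.cyclesMap f n) = ψ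
    rw [hf, hφ']

include hPI in
lemma syzN_essSurj0 [EnoughProjectives F] [EnoughInjectives F] :
    (syzN (F := F) 0).EssSurj where
  mem_essImage Y :=
    ⟨⟨(HomotopyCategory.quotient F (ComplexShape.up ℤ)).obj (res0 Y.as),
      ⟨res0_exactAt Y.as, res0_projective hPI Y.as⟩⟩,
      ⟨(CategoryTheory.Quotient.functor (stableRel F)).mapIso (res0CyclesIso Y.as).symm⟩⟩

include hPI in
lemma syzN_essSurj1 [EnoughProjectives F] [EnoughInjectives F] :
    (syzN (F := F) 1).EssSurj where
  mem_essImage Y :=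
    ⟨⟨(HomotopyCategory.quotient F (ComplexShape.up ℤ)).obj (res1 Y.as),
      ⟨res1_exactAt Y.as, res1_projective hPI Y.as⟩⟩,
      ⟨(CategoryTheory.Quotient.functor (stableRel F)).mapIso (res1CyclesIso Y.as).symm⟩⟩

end Functor


/-- Let `F` be a Frobenius category (here: an abelian category with enough
projectives and enough injectives in which projectives and injectives coincide), with `ω` its
class of projective-injective objects. Let `K_ac(ω)` be the homotopy category of acyclic
complexes with entries in `ω`, and let `F/ω` be the stable category (the quotient of `F` by
maps factoring through `ω`). Then the `0`-th cosyzygy and syzygy constructions induce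
equivalences `cosyz⁰, syz⁰ : K_ac(ω) ⥤ F/ω` which coincide up to the suspension `Σ` of the
stable category: `cosyz⁰ ≅ Σ ∘ syz⁰`. -/
theorem frobenius_stable_equivalences
    (F : Type u) [Category.{v} F] [Abelian F]
    [EnoughProjectives F] [EnoughInjectives F]
    (hPI : ∀ X : F, Projective X ↔ Injective X) :
    ∃ (cosyz syz :
        ObjectProperty.FullSubcategory (fun K : HomotopyCategory F (ComplexShape.up ℤ) =>
          (∀ n, (K.as).ExactAt n) ∧ (∀ n, Projective ((K.as).X n))) ⥤
          CategoryTheory.Quotient (stableRel F))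
      (Susp : CategoryTheory.Quotient (stableRel F) ⥤ CategoryTheory.Quotient (stableRel F)),
        cosyz.IsEquivalence ∧ syz.IsEquivalence ∧ Susp.IsEquivalence ∧
        Nonempty (cosyz ≅ syz ⋙ Susp) ∧
        (∀ K, Nonempty (syz.obj K ≅
          (CategoryTheory.Quotient.functor (stableRel F)).obj ((K.obj.as).cycles 0))) ∧
        (∀ K, Nonempty (cosyz.obj K ≅
          (CategoryTheory.Quotient.functor (stableRel F)).obj ((K.obj.as).cycles 1))) := by
  haveI : (syzN (F := F) 0).Faithful := syzN_faithful hPI 0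
  haveI : (syzN (F := F) 0).Full := syzN_full hPI 0
  haveI : (syzN (F := F) 0).EssSurj := syzN_essSurj0 hPI
  haveI : (syzN (F := F) 1).Faithful := syzN_faithful hPI 1
  haveI : (syzN (F := F) 1).Full := syzN_full hPI 1
  haveI : (syzN (F := F) 1).EssSurj := syzN_essSurj1 hPI
  haveI e0 : (syzN (F := F) 0).IsEquivalence := ⟨inferInstance, inferInstance, inferInstance⟩
  haveI e1 : (syzN (F := F) 1).IsEquivalence := ⟨inferInstance, inferInstance, inferInstance⟩
  let e := (syzN (F := F) 0).asEquivalence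
  refine ⟨syzN 1, syzN 0, e.inverse ⋙ syzN 1, e1, e0, inferInstance, ⟨?_⟩,
    fun K => ⟨Iso.refl _⟩, fun K => ⟨Iso.refl _⟩⟩
  exact (syzN 1).leftUnitor.symm ≪≫ Functor.isoWhiskerRight e.unitIso (syzN 1) ≪≫
    Functor.associator _ _ _
end
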